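/- arXiv:2002.07939 — 8 statements merged into one kernel-verified Lean document; each statement's English description precedes it below -/
import Mathlib

section
/- For any p > 1 and any non-negative real sequence (a_n), the classical discrete Hardy inequality holds: the sum over n of ((1/n) * sum_{k=1}^n a_k)^p is at most (p/(p-1))^p times the sum over n of a_n^p. -/
/-!
Writing `A n` for the mean of the first `n` terms, `a n = (n + 1) A (n + 1) - n A n`, so the
weighted AM-GM inequality `p x y ^ (p - 1) ≤ x ^ p + (p - 1) y ^ p` (with `x = A n`,
`y = A (n + 1)`) gives `(p - 1) A (n + 1) ^ p ≤ p a n A (n + 1) ^ (p - 1)` up to a telescoping term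
`n A n ^ p - (n + 1) A (n + 1) ^ p`. Summing and applying Hölder's inequality to the right-hand
side bounds `X = ∑ A ^ p` by `p / (p - 1) (∑ a ^ p) ^ (1 / p) X ^ (1 - 1 / p)`; dividing by
`X ^ (1 - 1 / p)` gives the truncated inequality, and the infinite one follows in `ℝ≥0∞`.
-/

open Finset

namespace Real

theorem mul_mul_rpow_sub_one_le {p x y : ℝ} (hp : 1 ≤ p) (hx : 0 ≤ x) (hy : 0 ≤ y) :
    p * x * y ^ (p - 1) ≤ x ^ p + (p - 1) * y ^ p := by
  have hp0 : 0 < p := by linarith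
  have h := geom_mean_le_arith_mean2_weighted (p₁ := x ^ p) (p₂ := y ^ p) (inv_nonneg.2 hp0.le)
    (sub_nonneg.2 (inv_le_one_of_one_le₀ hp)) (rpow_nonneg hx p) (rpow_nonneg hy p)
    (add_sub_cancel p⁻¹ 1)
  rw [← rpow_mul hx, ← rpow_mul hy, mul_inv_cancel₀ hp0.ne', rpow_one,
    show p * (1 - p⁻¹) = p - 1 by field_simp] at h
  calc p * x * y ^ (p - 1) = p * (x * y ^ (p - 1)) := by ring
    _ ≤ p * (p⁻¹ * x ^ p + (1 - p⁻¹) * y ^ p) := by gcongr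
    _ = x ^ p + (p - 1) * y ^ p := by field_simp

theorem le_rpow_mul_of_le_mul_rpow_mul_rpow {p q C X Y : ℝ} (hpq : p.HolderConjugate q)
    (hC : 0 ≤ C) (hX : 0 ≤ X) (hY : 0 ≤ Y) (h : X ≤ C * Y ^ p⁻¹ * X ^ q⁻¹) : X ≤ C ^ p * Y := by
  rcases hX.eq_or_lt with rfl | hX
  · positivity
  have hsplit : X = X ^ p⁻¹ * X ^ q⁻¹ := by
    rw [← rpow_add hX, hpq.inv_add_inv_eq_one, rpow_one]
  have hroot : X ^ p⁻¹ ≤ C * Y ^ p⁻¹ :=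
    le_of_mul_le_mul_right (by rw [← hsplit]; exact h) (rpow_pos_of_pos hX _)
  rwa [rpow_inv_le_iff_of_pos hX.le (by positivity) hpq.pos, mul_rpow hC (by positivity),
    rpow_inv_rpow hY hpq.ne_zero] at hroot

end Real

open Real

noncomputable def cesaroMean (a : ℕ → ℝ) (n : ℕ) : ℝ := (n : ℝ)⁻¹ * ∑ k ∈ range n, a k

section cesaroMean

variable {a : ℕ → ℝ} {p : ℝ}

theorem cesaroMean_nonneg (ha : ∀ n, 0 ≤ a n) (n : ℕ) : 0 ≤ cesaroMean a n :=
  mul_nonneg (by positivity) (sum_nonneg fun k _ => ha k)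

theorem natCast_mul_cesaroMean (a : ℕ → ℝ) (n : ℕ) :
    n * cesaroMean a n = ∑ k ∈ range n, a k := by
  rcases n.eq_zero_or_pos with rfl | hn
  · simp
  · rw [cesaroMean, ← mul_assoc, mul_inv_cancel₀ (by positivity), one_mul]

theorem eq_mul_cesaroMean_succ_sub (a : ℕ → ℝ) (n : ℕ) :
    a n = (n + 1 : ℕ) * cesaroMean a (n + 1) - n * cesaroMean a n := by
  rw [natCast_mul_cesaroMean, natCast_mul_cesaroMean, sum_range_succ, add_sub_cancel_left]

theorem sub_one_mul_cesaroMean_succ_rpow_le (hp : 1 ≤ p) (ha : ∀ n, 0 ≤ a n) (n : ℕ) :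
    (p - 1) * cesaroMean a (n + 1) ^ p ≤ p * a n * cesaroMean a (n + 1) ^ (p - 1)
      + (n * cesaroMean a n ^ p - (n + 1 : ℕ) * cesaroMean a (n + 1) ^ p) := by
  set y := cesaroMean a (n + 1)
  have hy : y ^ p = y * y ^ (p - 1) := by
    rw [← rpow_one_add' (cesaroMean_nonneg ha _) (by linarith), add_sub_cancel]
  have hamgm := mul_le_mul_of_nonneg_left
    (mul_mul_rpow_sub_one_le hp (cesaroMean_nonneg ha n) (cesaroMean_nonneg ha (n + 1)))
    n.cast_nonneg
  rw [eq_mul_cesaroMean_succ_sub a n]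
  push_cast at hamgm ⊢
  linear_combination hamgm + (p * (n + 1)) * hy

theorem sub_one_mul_sum_cesaroMean_rpow_le (hp : 1 ≤ p) (ha : ∀ n, 0 ≤ a n) (N : ℕ) :
    (p - 1) * ∑ n ∈ range N, cesaroMean a (n + 1) ^ p
      ≤ p * ∑ n ∈ range N, a n * cesaroMean a (n + 1) ^ (p - 1) := by
  have htelescope : ∑ n ∈ range N, (n * cesaroMean a n ^ p
      - (n + 1 : ℕ) * cesaroMean a (n + 1) ^ p) = -(N * cesaroMean a N ^ p) := by
    rw [sum_range_sub' (fun n => (n : ℝ) * cesaroMean a n ^ p)]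
    simp
  have hlast : 0 ≤ N * cesaroMean a N ^ p := by
    have := cesaroMean_nonneg ha N
    positivity
  calc (p - 1) * ∑ n ∈ range N, cesaroMean a (n + 1) ^ p
      = ∑ n ∈ range N, (p - 1) * cesaroMean a (n + 1) ^ p := mul_sum _ _ _
    _ ≤ ∑ n ∈ range N, (p * a n * cesaroMean a (n + 1) ^ (p - 1)
          + (n * cesaroMean a n ^ p - (n + 1 : ℕ) * cesaroMean a (n + 1) ^ p)) :=
        sum_le_sum fun n _ => sub_one_mul_cesaroMean_succ_rpow_le hp ha n
    _ = p * ∑ n ∈ range N, a n * cesaroMean a (n + 1) ^ (p - 1) - N * cesaroMean a N ^ p := by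
        rw [sum_add_distrib, htelescope, mul_sum]
        simp only [mul_assoc, sub_eq_add_neg]
    _ ≤ p * ∑ n ∈ range N, a n * cesaroMean a (n + 1) ^ (p - 1) := sub_le_self _ hlast

theorem sum_cesaroMean_rpow_le (hp : 1 < p) (ha : ∀ n, 0 ≤ a n) (N : ℕ) :
    ∑ n ∈ range N, cesaroMean a (n + 1) ^ p ≤ (p / (p - 1)) ^ p * ∑ n ∈ range N, a n ^ p := by
  have hpq : p.HolderConjugate (p / (p - 1)) := .conjExponent hp
  have hmean := fun n => cesaroMean_nonneg ha n
  have hholder := inner_le_Lp_mul_Lq_of_nonneg (range N) hpq (f := a)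
    (g := fun n => cesaroMean a (n + 1) ^ (p - 1)) (fun n _ => ha n)
    (fun n _ => rpow_nonneg (hmean _) _)
  simp only [← rpow_mul (hmean _), hpq.sub_one_mul_conj, one_div] at hholder
  refine le_rpow_mul_of_le_mul_rpow_mul_rpow hpq hpq.symm.nonneg
    (sum_nonneg fun n _ => rpow_nonneg (hmean _) _) (sum_nonneg fun n _ => rpow_nonneg (ha n) _) ?_
  calc ∑ n ∈ range N, cesaroMean a (n + 1) ^ p
      ≤ p / (p - 1) * ∑ n ∈ range N, a n * cesaroMean a (n + 1) ^ (p - 1) := by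
        rw [div_mul_eq_mul_div, le_div_iff₀ hpq.sub_one_pos, mul_comm]
        exact sub_one_mul_sum_cesaroMean_rpow_le hp.le ha N
    _ ≤ _ := by
        rw [mul_assoc]
        gcongr

end cesaroMean

/-- Classical discrete Hardy inequality. Sequences are indexed by `n : ℕ`
representing the term `a_{n+1}`; the sum `∑_{k=1}^{n} a_k` is `∑ k in range n, a k`
shifted accordingly. The inequality is interpreted in `[0,∞]`. -/
theorem discrete_hardy_inequality (p : ℝ) (hp : 1 < p) (a : ℕ → ℝ) (ha : ∀ n, 0 ≤ a n) :
    ∑' n : ℕ, ENNReal.ofReal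
        ((1 / (n + 1 : ℝ)) * ∑ k ∈ Finset.range (n + 1), a k) ^ p
      ≤ ENNReal.ofReal ((p / (p - 1)) ^ p) * ∑' n : ℕ, ENNReal.ofReal (a n) ^ p := by
  have hp0 : 0 ≤ p := by linarith
  refine ENNReal.tsum_le_of_sum_range_le fun N => ?_
  calc ∑ n ∈ range N, ENNReal.ofReal ((1 / (n + 1 : ℝ)) * ∑ k ∈ range (n + 1), a k) ^ p
      = ENNReal.ofReal (∑ n ∈ range N, cesaroMean a (n + 1) ^ p) := by
        rw [ENNReal.ofReal_sum_of_nonneg fun n _ => rpow_nonneg (cesaroMean_nonneg ha _) _]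
        refine sum_congr rfl fun n _ => ?_
        have hmean : 1 / (n + 1 : ℝ) * ∑ k ∈ range (n + 1), a k = cesaroMean a (n + 1) := by
          simp [cesaroMean]
        rw [hmean, ENNReal.ofReal_rpow_of_nonneg (cesaroMean_nonneg ha _) hp0]
    _ ≤ ENNReal.ofReal ((p / (p - 1)) ^ p * ∑ n ∈ range N, a n ^ p) :=
        ENNReal.ofReal_le_ofReal (sum_cesaroMean_rpow_le hp ha N)
    _ = ENNReal.ofReal ((p / (p - 1)) ^ p) * ∑ n ∈ range N, ENNReal.ofReal (a n) ^ p := by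
        rw [ENNReal.ofReal_mul (by positivity),
          ENNReal.ofReal_sum_of_nonneg fun n _ => rpow_nonneg (ha n) _]
        simp only [ENNReal.ofReal_rpow_of_nonneg (ha _) hp0]
    _ ≤ _ := by
        gcongr
        exact ENNReal.sum_le_tsum _
end

section
/- Let p,q > 1 with 1/p + 1/q = 1, and let (Ω_i) be positive reals and (ω_i) positive reals. Then the inequality sum_{j≥1} Ω_j ω_j^p (sum_{i=1}^j d_i)^p ≤ C^p sum_{j≥1} Ω_j ω_j^p d_j^p holds for all non-negative sequences (d_j) if and only if the dual inequality sum_{i≥1} Ω_i^{1-q} ω_i^{-q} (sum_{j≥i}^∞ b_j)^q ≤ C^q sum_{i≥1} Ω_i^{1-q} ω_i^{-q} b_i^q holds for all non-negative sequences (b_i), with the same constant C. -/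
/-!
The Hardy operator `d ↦ (∑_{i ≤ j} d_i)_j` and the tail operator `b ↦ (∑_{j ≥ i} b_j)_i` are
transposes of each other, and the weight `U = Ω ω^p` of the Hardy inequality turns into
`U^{1-q} = Ω^{1-q} ω^{-q}`. So the theorem is an instance of duality for weighted `ℓ^r` bounds of
nonnegative kernels: `‖Tf‖` in `ℓ^r(w)` is the supremum of `⟨Tf, g⟩` over the unit ball of
`ℓ^s(w^{1-s})`, and `⟨Tf, g⟩ = ⟨f, Tᵀg⟩` is controlled by Hölder's inequality and the bound on `Tᵀ`.
Working in `[0, ∞]` makes every interchange of summations free.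
-/

open Finset

open scoped ENNReal

variable {ι κ : Type*} {r s : ℝ}

namespace ENNReal

theorem inner_le_Lp_mul_Lq_tsum (hrs : r.HolderConjugate s) (f g : ι → ℝ≥0∞) :
    ∑' i, f i * g i ≤ (∑' i, f i ^ r) ^ (1 / r) * (∑' i, g i ^ s) ^ (1 / s) := by
  have := hrs.one_div_nonneg
  have := hrs.symm.one_div_nonneg
  rw [ENNReal.tsum_eq_iSup_sum]
  refine iSup_le fun t => (inner_le_Lp_mul_Lq t f g hrs).trans ?_
  gcongr <;> exact ENNReal.sum_le_tsum t

theorem inner_le_weight_mul_Lp_mul_Lq_tsum (hrs : r.HolderConjugate s) {w : ι → ℝ≥0∞}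
    (hw0 : ∀ i, w i ≠ 0) (hwt : ∀ i, w i ≠ ⊤) (f g : ι → ℝ≥0∞) :
    ∑' i, f i * g i ≤
      (∑' i, w i * f i ^ r) ^ (1 / r) * (∑' i, w i ^ (1 - s) * g i ^ s) ^ (1 / s) := by
  have hsplit : ∀ i, f i * g i = (w i ^ (1 / r) * f i) * (w i ^ (-(1 / r)) * g i) := fun i => by
    rw [mul_mul_mul_comm, ← rpow_add _ _ (hw0 i) (hwt i), add_neg_cancel, rpow_zero, one_mul]
  have hf : ∀ i, (w i ^ (1 / r) * f i) ^ r = w i * f i ^ r := fun i => by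
    rw [mul_rpow_of_nonneg _ _ hrs.nonneg, ← rpow_mul, one_div_mul_cancel hrs.ne_zero, rpow_one]
  have hg : ∀ i, (w i ^ (-(1 / r)) * g i) ^ s = w i ^ (1 - s) * g i ^ s := fun i => by
    rw [mul_rpow_of_nonneg _ _ hrs.symm.nonneg, ← rpow_mul, neg_mul, one_div_mul_eq_div,
      hrs.symm.div_conj_eq_sub_one, neg_sub]
  simpa only [hsplit, hf, hg] using
    inner_le_Lp_mul_Lq_tsum hrs (fun i => w i ^ (1 / r) * f i) (fun i => w i ^ (-(1 / r)) * g i)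

theorem le_rpow_of_le_mul_rpow_one_div (hrs : r.HolderConjugate s) {x B : ℝ≥0∞} (hx : x ≠ ⊤)
    (h : x ≤ B * x ^ (1 / s)) : x ≤ B ^ r := by
  rcases eq_or_ne x 0 with rfl | hx0
  · exact zero_le
  have hxs0 : x ^ (1 / s) ≠ 0 := by simp [rpow_eq_zero_iff, hx0, hx]
  have hxst : x ^ (1 / s) ≠ ⊤ := by simp [rpow_eq_top_iff, hx0, hx]
  have hsplit : x = x ^ r⁻¹ * x ^ (1 / s) := by
    rw [← rpow_add _ _ hx0 hx, one_div, hrs.inv_add_inv_eq_one, rpow_one]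
  have h' : x ^ r⁻¹ * x ^ (1 / s) ≤ B * x ^ (1 / s) := by rwa [← hsplit]
  exact (rpow_inv_le_iff hrs.pos).mp ((ENNReal.mul_le_mul_iff_left hxs0 hxst).mp h')

end ENNReal

open ENNReal

theorem tsum_mul_rpow_le_of_forall_tsum_mul_le (hrs : r.HolderConjugate s) {w a : ι → ℝ≥0∞}
    (hw0 : ∀ i, w i ≠ 0) (hwt : ∀ i, w i ≠ ⊤) {B : ℝ≥0∞}
    (h : ∀ g : ι → ℝ≥0∞, (∀ i, g i ≠ ⊤) →
      ∑' i, a i * g i ≤ B * (∑' i, w i ^ (1 - s) * g i ^ s) ^ (1 / s)) :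
    ∑' i, w i * a i ^ r ≤ B ^ r := by
  classical
  -- A point mass shows `a` is finite; then `g = w a^(r-1)` on a finite set is the Hölder extremal.
  rcases eq_or_ne B ⊤ with rfl | hB
  · simp [top_rpow_of_pos hrs.pos]
  have ha : ∀ i, a i ≠ ⊤ := by
    intro i
    have hi := h (Pi.single i 1) fun j => by by_cases hj : j = i <;> simp [hj]
    simp only [Pi.single_apply, mul_ite, mul_one, mul_zero, tsum_ite_eq, ite_pow, one_rpow,
      zero_rpow_of_pos hrs.symm.pos] at hi
    exact ne_top_of_le_ne_top (mul_ne_top hB (rpow_ne_top_of_nonneg hrs.symm.one_div_nonneg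
      (rpow_ne_top_of_ne_zero (hw0 i) (hwt i)))) hi
  rw [ENNReal.tsum_eq_iSup_sum]
  refine iSup_le fun t => ?_
  let g : ι → ℝ≥0∞ := fun i => if i ∈ t then w i * a i ^ (r - 1) else 0
  have hg : ∀ i, g i ≠ ⊤ := fun i => by
    by_cases hi : i ∈ t
    · simpa [g, hi] using mul_ne_top (hwt i) (rpow_ne_top_of_nonneg hrs.sub_one_pos.le (ha i))
    · simp [g, hi]
  have hpair : ∑' i, a i * g i = ∑ i ∈ t, w i * a i ^ r := by
    rw [tsum_eq_sum (s := t) fun i hi => by simp [g, hi]]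
    refine sum_congr rfl fun i hi => ?_
    simp only [g, if_pos hi]
    conv_rhs => rw [← add_sub_cancel 1 r, rpow_add_of_nonneg _ _ zero_le_one hrs.sub_one_pos.le,
      rpow_one, mul_left_comm]
  have hnorm : ∑' i, w i ^ (1 - s) * g i ^ s = ∑ i ∈ t, w i * a i ^ r := by
    rw [tsum_eq_sum (s := t) fun i hi => by simp [g, hi, zero_rpow_of_pos hrs.symm.pos]]
    refine sum_congr rfl fun i hi => ?_
    simp only [g, if_pos hi]
    rw [mul_rpow_of_nonneg _ _ hrs.symm.nonneg, ← rpow_mul, hrs.sub_one_mul_conj, ← mul_assoc,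
      ← rpow_add _ _ (hw0 i) (hwt i), sub_add_cancel, rpow_one]
  have hS := h g hg
  rw [hpair, hnorm] at hS
  refine le_rpow_of_le_mul_rpow_one_div hrs ?_ hS
  exact sum_ne_top.mpr fun i _ => mul_ne_top (hwt i) (rpow_ne_top_of_nonneg hrs.nonneg (ha i))

def WeightedKernelBound (r : ℝ) (w : κ → ℝ≥0∞) (v : ι → ℝ≥0∞) (K : κ → ι → ℝ≥0∞) (C : ℝ≥0∞) :
    Prop :=
  ∀ f : ι → ℝ≥0∞, (∀ i, f i ≠ ⊤) →
    ∑' j, w j * (∑' i, K j i * f i) ^ r ≤ C ^ r * ∑' i, v i * f i ^ r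

section Duality

variable {w : κ → ℝ≥0∞} {v : ι → ℝ≥0∞} {K : κ → ι → ℝ≥0∞} {C : ℝ≥0∞}

theorem WeightedKernelBound.of_transpose (hrs : r.HolderConjugate s) (hw0 : ∀ j, w j ≠ 0)
    (hwt : ∀ j, w j ≠ ⊤) (hv0 : ∀ i, v i ≠ 0) (hvt : ∀ i, v i ≠ ⊤)
    (h : WeightedKernelBound s (fun i => v i ^ (1 - s)) (fun j => w j ^ (1 - s))
      (fun i j => K j i) C) :
    WeightedKernelBound r w v K C := by
  intro f _
  set R := ∑' i, v i * f i ^ r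
  have hpair : ∀ g : κ → ℝ≥0∞, (∀ j, g j ≠ ⊤) → ∑' j, (∑' i, K j i * f i) * g j ≤
      C * R ^ (1 / r) * (∑' j, w j ^ (1 - s) * g j ^ s) ^ (1 / s) := by
    intro g hg
    calc ∑' j, (∑' i, K j i * f i) * g j = ∑' i, f i * ∑' j, K j i * g j := by
          simp_rw [← ENNReal.tsum_mul_right, ← ENNReal.tsum_mul_left]
          rw [ENNReal.tsum_comm]
          exact tsum_congr fun i => tsum_congr fun j => by ring
      _ ≤ R ^ (1 / r) * (∑' i, v i ^ (1 - s) * (∑' j, K j i * g j) ^ s) ^ (1 / s) :=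
          inner_le_weight_mul_Lp_mul_Lq_tsum hrs hv0 hvt _ _
      _ ≤ R ^ (1 / r) * (C ^ s * ∑' j, w j ^ (1 - s) * g j ^ s) ^ (1 / s) := by
          have := hrs.symm.one_div_nonneg
          gcongr
          exact h g hg
      _ = C * R ^ (1 / r) * (∑' j, w j ^ (1 - s) * g j ^ s) ^ (1 / s) := by
          rw [mul_rpow_of_nonneg _ _ hrs.symm.one_div_nonneg, ← rpow_mul,
            mul_one_div_cancel hrs.symm.ne_zero, rpow_one, mul_left_comm, mul_assoc]
  calc ∑' j, w j * (∑' i, K j i * f i) ^ r ≤ (C * R ^ (1 / r)) ^ r :=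
        tsum_mul_rpow_le_of_forall_tsum_mul_le hrs hw0 hwt hpair
    _ = C ^ r * R := by
        rw [mul_rpow_of_nonneg _ _ hrs.nonneg, ← rpow_mul, one_div_mul_cancel hrs.ne_zero, rpow_one]

theorem weightedKernelBound_transpose_iff (hrs : r.HolderConjugate s) (hw0 : ∀ j, w j ≠ 0)
    (hwt : ∀ j, w j ≠ ⊤) (hv0 : ∀ i, v i ≠ 0) (hvt : ∀ i, v i ≠ ⊤) :
    WeightedKernelBound s (fun i => v i ^ (1 - s)) (fun j => w j ^ (1 - s)) (fun i j => K j i) C ↔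
      WeightedKernelBound r w v K C := by
  have hpow : ∀ x : ℝ≥0∞, (x ^ (1 - s)) ^ (1 - r) = x := fun x => by
    rw [← rpow_mul, show (1 - s) * (1 - r) = 1 by linear_combination hrs.mul_eq_add, rpow_one]
  refine ⟨.of_transpose hrs hw0 hwt hv0 hvt, fun h => .of_transpose hrs.symm
    (fun i => (rpow_pos (pos_iff_ne_zero.2 (hv0 i)) (hvt i)).ne')
    (fun i => rpow_ne_top_of_ne_zero (hv0 i) (hvt i))
    (fun j => (rpow_pos (pos_iff_ne_zero.2 (hw0 j)) (hwt j)).ne')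
    (fun j => rpow_ne_top_of_ne_zero (hw0 j) (hwt j)) ?_⟩
  simpa only [hpow] using h

end Duality

theorem forall_nonneg_ofReal_iff {P : (ι → ℝ≥0∞) → Prop} :
    (∀ d : ι → ℝ, (∀ i, 0 ≤ d i) → P fun i => ENNReal.ofReal (d i)) ↔
      ∀ g : ι → ℝ≥0∞, (∀ i, g i ≠ ⊤) → P g :=
  ⟨fun h g hg => by
      simpa [ofReal_toReal, hg] using h (fun i => (g i).toReal) fun _ => toReal_nonneg,
    fun h _ _ => h _ fun _ => ofReal_ne_top⟩

theorem tsum_ite_le_mul_eq_sum_range (g : ℕ → ℝ≥0∞) (j : ℕ) :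
    ∑' i, (if i ≤ j then 1 else 0) * g i = ∑ i ∈ range (j + 1), g i := by
  rw [tsum_eq_sum (s := range (j + 1)) fun i hi => by simp_all]
  exact sum_congr rfl fun i hi => by simp [Nat.lt_succ_iff.mp (mem_range.mp hi)]

theorem tsum_le_ite_mul_eq_tsum_add (g : ℕ → ℝ≥0∞) (i : ℕ) :
    ∑' j, (if i ≤ j then 1 else 0) * g j = ∑' m, g (i + m) := by
  rw [← Summable.sum_add_tsum_nat_add' (k := i) ENNReal.summable,
    sum_eq_zero fun j hj => by simp [mem_range.mp hj]]
  simp [add_comm]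

theorem hardy_iff_weightedKernelBound {p : ℝ} (hp : 0 ≤ p) (U : ℕ → ℝ≥0∞) {C : ℝ} (hC : 0 ≤ C) :
    (∀ d : ℕ → ℝ, (∀ n, 0 ≤ d n) →
      ∑' j, U j * ENNReal.ofReal (∑ i ∈ range (j + 1), d i) ^ p ≤
        ENNReal.ofReal (C ^ p) * ∑' j, U j * ENNReal.ofReal (d j) ^ p) ↔
      WeightedKernelBound p U U (fun j i => if i ≤ j then 1 else 0) (ENNReal.ofReal C) := by
  rw [WeightedKernelBound, ← forall_nonneg_ofReal_iff]
  refine forall₂_congr fun d hd => ?_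
  simp only [tsum_ite_le_mul_eq_sum_range, ofReal_sum_of_nonneg fun i _ => hd i,
    ofReal_rpow_of_nonneg hC hp]

theorem dualHardy_iff_weightedKernelBound {q : ℝ} (hq : 0 ≤ q) (V : ℕ → ℝ≥0∞) {C : ℝ}
    (hC : 0 ≤ C) :
    (∀ b : ℕ → ℝ, (∀ n, 0 ≤ b n) →
      ∑' i, V i * (∑' j, ENNReal.ofReal (b (i + j))) ^ q ≤
        ENNReal.ofReal (C ^ q) * ∑' i, V i * ENNReal.ofReal (b i) ^ q) ↔
      WeightedKernelBound q V V (fun i j => if i ≤ j then 1 else 0) (ENNReal.ofReal C) := by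
  rw [WeightedKernelBound, ← forall_nonneg_ofReal_iff]
  refine forall₂_congr fun b _ => ?_
  simp only [tsum_le_ite_mul_eq_tsum_add, ofReal_rpow_of_nonneg hC hq]

/-- Index `n` stands for the paper's `n + 1`, so `range (j + 1)` is `{1, …, j}` and `b (i + j)`
runs over the indices `≥ i`; the inequalities are read in `[0, ∞]`. -/
theorem hardy_duality_general (p q : ℝ) (hp : 1 < p) (hpq : 1 / p + 1 / q = 1)
    (Om om : ℕ → ℝ) (hOm : ∀ i, 0 < Om i) (hom : ∀ i, 0 < om i) (C : ℝ) (hC : 0 < C) :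
    (∀ d : ℕ → ℝ, (∀ n, 0 ≤ d n) →
      ∑' j : ℕ, ENNReal.ofReal (Om j * om j ^ p) *
          ENNReal.ofReal (∑ i ∈ Finset.range (j + 1), d i) ^ p
        ≤ ENNReal.ofReal (C ^ p) *
          ∑' j : ℕ, ENNReal.ofReal (Om j * om j ^ p) * ENNReal.ofReal (d j) ^ p)
    ↔
    (∀ b : ℕ → ℝ, (∀ n, 0 ≤ b n) →
      ∑' i : ℕ, ENNReal.ofReal (Om i ^ (1 - q) * om i ^ (-q)) *
          (∑' j : ℕ, ENNReal.ofReal (b (i + j))) ^ q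
        ≤ ENNReal.ofReal (C ^ q) *
          ∑' i : ℕ, ENNReal.ofReal (Om i ^ (1 - q) * om i ^ (-q)) * ENNReal.ofReal (b i) ^ q) := by
  have hpq' : p.HolderConjugate q :=
    Real.holderConjugate_iff.mpr ⟨hp, by simpa only [one_div] using hpq⟩
  have hom_pow : ∀ i, 0 < om i ^ p := fun i => Real.rpow_pos_of_pos (hom i) p
  have hUpos : ∀ i, 0 < Om i * om i ^ p := fun i => mul_pos (hOm i) (hom_pow i)
  have hdual_weight : ∀ i, ENNReal.ofReal (Om i ^ (1 - q) * om i ^ (-q)) =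
      ENNReal.ofReal (Om i * om i ^ p) ^ (1 - q) := fun i => by
    rw [ofReal_rpow_of_pos (hUpos i), Real.mul_rpow (hOm i).le (hom_pow i).le,
      ← Real.rpow_mul (hom i).le,
      show p * (1 - q) = -q by linear_combination -hpq'.mul_eq_add]
  simp only [hdual_weight]
  rw [hardy_iff_weightedKernelBound hpq'.nonneg _ hC.le,
    dualHardy_iff_weightedKernelBound hpq'.symm.nonneg _ hC.le]
  exact (weightedKernelBound_transpose_iff hpq' (fun i => (ofReal_pos.2 (hUpos i)).ne')
    (fun _ => ofReal_ne_top) (fun i => (ofReal_pos.2 (hUpos i)).ne') fun _ => ofReal_ne_top).symm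

/-- Duality between the weighted discrete Hardy inequality and its dual version.
Sequences are indexed by `n : ℕ` representing index `n+1 ≥ 1`; `∑ i in range (j+1)`
is the partial sum `∑_{i=1}^{j}` and `∑' j, b (i + j)` is the tail sum `∑_{j≥i}`.
All inequalities are interpreted in `[0,∞]`. -/
theorem hardy_duality (p q : ℝ) (hp : 1 < p) (hq : 1 < q) (hpq : 1 / p + 1 / q = 1)
    (Om om : ℕ → ℝ) (hOm : ∀ i, 0 < Om i) (hom : ∀ i, 0 < om i) (C : ℝ) (hC : 0 < C) :
    (∀ d : ℕ → ℝ, (∀ n, 0 ≤ d n) →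
      ∑' j : ℕ, ENNReal.ofReal (Om j * om j ^ p) *
          ENNReal.ofReal (∑ i ∈ Finset.range (j + 1), d i) ^ p
        ≤ ENNReal.ofReal (C ^ p) *
          ∑' j : ℕ, ENNReal.ofReal (Om j * om j ^ p) * ENNReal.ofReal (d j) ^ p)
    ↔
    (∀ b : ℕ → ℝ, (∀ n, 0 ≤ b n) →
      ∑' i : ℕ, ENNReal.ofReal (Om i ^ (1 - q) * om i ^ (-q)) *
          (∑' j : ℕ, ENNReal.ofReal (b (i + j))) ^ q
        ≤ ENNReal.ofReal (C ^ q) *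
          ∑' i : ℕ, ENNReal.ofReal (Om i ^ (1 - q) * om i ^ (-q)) * ENNReal.ofReal (b i) ^ q) :=
  hardy_duality_general p q hp hpq Om om hOm hom C hC
end

section
/- Let p, q > 1 with 1/p + 1/q = 1, let γ ≥ 1 and β > (-γ-1)/p, and set r = 2^{-pβ - γ - 1} ∈ (0,1) and u_i = C_γ r^i with C_γ = (1 - 2^{-2(γ+1)})/(γ+1). Then there exists a constant C (one may take C = 4 (1/(r(1-r)))^{1/p} (1/(r^{1-q}-1))^{1/q}) such that for every non-negative sequence (d_j), sum_{j≥1} u_j (sum_{i=1}^j d_i)^p ≤ C^p sum_{j≥1} u_j d_j^p. -/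
/-!
Factoring out `C_γ r`, the claim is Hardy's inequality for the geometric weights `ρ ^ j`, `ρ = r`.
For `σ = ρ ^ (1/p)`, the sequence `σ ^ j * ∑_{i ≤ j} d i` is the convolution of the kernel `σ ^ n`
with `σ ^ i * d i`, so Young's inequality `‖k * c‖_p ≤ ‖k‖_1 ‖c‖_p` (weighted Hölder at each `j`,
then a Cauchy product) yields the constant `(1 - σ)⁻¹ ^ p`. The explicit `C` equals
`4 / ((1 - σ^p)^(1/p) (1 - σ^q)^(1/q))`; Bernoulli's inequality `1 - σ^t ≤ t (1 - σ)` and AM-GM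
`p^(1/p) q^(1/q) ≤ 2` bound this denominator by `2 (1 - σ)`, so `(1 - σ)⁻¹ ≤ C`.
-/

open Finset
open scoped ENNReal

theorem ENNReal.tsum_mul_tsum_eq_tsum_sum_range (f g : ℕ → ℝ≥0∞) :
    (∑' n, f n) * ∑' n, g n = ∑' n, ∑ k ∈ range (n + 1), f k * g (n - k) := by
  simp_rw [← Nat.sum_antidiagonal_eq_sum_range_succ fun k l => f k * g l,
    ← Finset.tsum_subtype (antidiagonal _), ← ENNReal.tsum_mul_right, ← ENNReal.tsum_mul_left]
  rw [← ENNReal.tsum_prod, ← HasAntidiagonal.sigmaAntidiagonalEquivProd.tsum_eq,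
    ENNReal.tsum_sigma']
  rfl

theorem ENNReal.tsum_sum_range_mul_rpow_le {p : ℝ} (hp : 1 ≤ p) (k c : ℕ → ℝ≥0∞) :
    ∑' j, (∑ i ∈ range (j + 1), k (j - i) * c i) ^ p ≤ (∑' n, k n) ^ p * ∑' i, c i ^ p := by
  set K := ∑' n, k n
  have hp0 : 0 < p := by linarith
  have hpoint : ∀ j, (∑ i ∈ range (j + 1), k (j - i) * c i) ^ p
      ≤ K ^ (p - 1) * ∑ i ∈ range (j + 1), c i ^ p * k (j - i) := by
    intro j
    have hkj : ∑ i ∈ range (j + 1), k (j - i) ≤ K := by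
      have hrefl := sum_range_reflect k (j + 1)
      rw [add_tsub_cancel_right] at hrefl
      exact hrefl.trans_le (ENNReal.sum_le_tsum _)
    calc (∑ i ∈ range (j + 1), k (j - i) * c i) ^ p
        ≤ ((∑ i ∈ range (j + 1), k (j - i)) ^ (1 - p⁻¹)
            * (∑ i ∈ range (j + 1), k (j - i) * c i ^ p) ^ p⁻¹) ^ p := by
          gcongr
          exact ENNReal.inner_le_weight_mul_Lp_of_nonneg _ hp _ _
      _ = (∑ i ∈ range (j + 1), k (j - i)) ^ (p - 1)
            * ∑ i ∈ range (j + 1), c i ^ p * k (j - i) := by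
          rw [ENNReal.mul_rpow_of_nonneg _ _ hp0.le, ← ENNReal.rpow_mul,
            ENNReal.rpow_inv_rpow hp0.ne', sub_mul, inv_mul_cancel₀ hp0.ne', one_mul]
          simp_rw [mul_comm (k _)]
      _ ≤ K ^ (p - 1) * ∑ i ∈ range (j + 1), c i ^ p * k (j - i) := by
          gcongr
  calc ∑' j, (∑ i ∈ range (j + 1), k (j - i) * c i) ^ p
      ≤ ∑' j, K ^ (p - 1) * ∑ i ∈ range (j + 1), c i ^ p * k (j - i) :=
        ENNReal.tsum_le_tsum hpoint
    _ = K ^ (p - 1) * ((∑' i, c i ^ p) * K) := by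
        rw [ENNReal.tsum_mul_left, ENNReal.tsum_mul_tsum_eq_tsum_sum_range]
    _ = K ^ p * ∑' i, c i ^ p := by
        have hK : K ^ (p - 1) * K = K ^ p := by
          simpa using (ENNReal.rpow_add_of_nonneg (x := K) _ _ (sub_nonneg.2 hp) zero_le_one).symm
        rw [mul_comm _ K, ← mul_assoc, hK]

theorem ENNReal.tsum_geometric_mul_sum_range_rpow_le {p : ℝ} (hp : 1 ≤ p) (ρ : ℝ≥0∞)
    (a : ℕ → ℝ≥0∞) :
    ∑' j, ρ ^ j * (∑ i ∈ range (j + 1), a i) ^ p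
      ≤ ((1 - ρ ^ p⁻¹)⁻¹) ^ p * ∑' j, ρ ^ j * a j ^ p := by
  set σ := ρ ^ p⁻¹
  have hp0 : 0 < p := by linarith
  have hσ : ∀ n : ℕ, (σ ^ n) ^ p = ρ ^ n := fun n => by
    rw [← ENNReal.rpow_natCast_mul, mul_comm, ENNReal.rpow_mul, ENNReal.rpow_inv_rpow hp0.ne',
      ENNReal.rpow_natCast]
  have hsum : ∀ j, σ ^ j * ∑ i ∈ range (j + 1), a i
      = ∑ i ∈ range (j + 1), σ ^ (j - i) * (σ ^ i * a i) := fun j => by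
    rw [mul_sum]
    refine sum_congr rfl fun i hi => ?_
    rw [← mul_assoc, pow_sub_mul_pow σ (mem_range_succ_iff.mp hi)]
  calc ∑' j, ρ ^ j * (∑ i ∈ range (j + 1), a i) ^ p
      = ∑' j, (∑ i ∈ range (j + 1), σ ^ (j - i) * (σ ^ i * a i)) ^ p := by
        refine tsum_congr fun j => ?_
        rw [← hsum, ENNReal.mul_rpow_of_nonneg _ _ hp0.le, hσ]
    _ ≤ (∑' n, σ ^ n) ^ p * ∑' i, (σ ^ i * a i) ^ p :=
        ENNReal.tsum_sum_range_mul_rpow_le hp _ _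
    _ = ((1 - σ)⁻¹) ^ p * ∑' j, ρ ^ j * a j ^ p := by
        simp only [ENNReal.tsum_geometric, ENNReal.mul_rpow_of_nonneg _ _ hp0.le, hσ]

theorem one_sub_rpow_le_mul_one_sub {s t : ℝ} (hs : 0 ≤ s) (ht : 1 ≤ t) :
    1 - s ^ t ≤ t * (1 - s) := by
  have h := one_add_mul_self_le_rpow_one_add (by linarith : (-1 : ℝ) ≤ s - 1) ht
  rw [add_sub_cancel] at h
  linarith

theorem Real.HolderConjugate.rpow_one_div_mul_rpow_one_div_le_two {p q : ℝ}
    (hpq : p.HolderConjugate q) : p ^ (1 / p) * q ^ (1 / q) ≤ 2 := by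
  have h := Real.geom_mean_le_arith_mean2_weighted hpq.one_div_nonneg hpq.symm.one_div_nonneg
    hpq.nonneg hpq.symm.nonneg (by simpa using hpq.inv_add_inv_eq_one)
  rwa [one_div_mul_cancel hpq.ne_zero, one_div_mul_cancel hpq.symm.ne_zero, one_add_one_eq_two]
    at h

theorem Real.HolderConjugate.one_sub_rpow_mul_one_sub_rpow_le {p q s : ℝ}
    (hpq : p.HolderConjugate q) (hs0 : 0 ≤ s) (hs1 : s ≤ 1) :
    (1 - s ^ p) ^ (1 / p) * (1 - s ^ q) ^ (1 / q) ≤ 2 * (1 - s) := by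
  have h1s : 0 ≤ 1 - s := by linarith
  have hpq' : 1 / p + 1 / q = 1 := by simpa only [one_div] using hpq.inv_add_inv_eq_one
  have bound {t : ℝ} (ht : 1 < t) : (1 - s ^ t) ^ (1 / t) ≤ (t * (1 - s)) ^ (1 / t) :=
    Real.rpow_le_rpow (sub_nonneg.2 (Real.rpow_le_one hs0 hs1 (by linarith)))
      (one_sub_rpow_le_mul_one_sub hs0 ht.le) (by positivity)
  calc (1 - s ^ p) ^ (1 / p) * (1 - s ^ q) ^ (1 / q)
      ≤ (p * (1 - s)) ^ (1 / p) * (q * (1 - s)) ^ (1 / q) :=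
        mul_le_mul (bound hpq.lt) (bound hpq.symm.lt)
          (Real.rpow_nonneg (sub_nonneg.2 (Real.rpow_le_one hs0 hs1 hpq.symm.nonneg)) _)
          (Real.rpow_nonneg (mul_nonneg hpq.nonneg h1s) _)
    _ = p ^ (1 / p) * q ^ (1 / q) * (1 - s) := by
        rw [Real.mul_rpow hpq.nonneg h1s, Real.mul_rpow hpq.symm.nonneg h1s, mul_mul_mul_comm,
          ← Real.rpow_add' h1s (by rw [hpq']; exact one_ne_zero), hpq', Real.rpow_one]
    _ ≤ 2 * (1 - s) := by
        gcongr
        exact hpq.rpow_one_div_mul_rpow_one_div_le_two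

theorem Real.HolderConjugate.inv_one_sub_rpow_one_div_le {p q r : ℝ} (hpq : p.HolderConjugate q)
    (hr0 : 0 < r) (hr1 : r < 1) :
    (1 - r ^ (1 / p))⁻¹
      ≤ 4 * (1 / (r * (1 - r))) ^ (1 / p) * (1 / (r ^ (1 - q) - 1)) ^ (1 / q) := by
  set s := r ^ (1 / p)
  have hs0 : 0 < s := Real.rpow_pos_of_pos hr0 _
  have hs1 : s < 1 := Real.rpow_lt_one hr0.le hr1 hpq.one_div_pos
  have hsp : s ^ p = r := by
    rw [← Real.rpow_mul hr0.le, one_div_mul_cancel hpq.ne_zero, Real.rpow_one]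
  have hsq1 : s ^ q < 1 := Real.rpow_lt_one hs0.le hs1 hpq.symm.pos
  have hrq : r ^ (1 - q) = (s ^ q)⁻¹ := by
    rw [← hsp, ← Real.rpow_mul hs0.le, ← Real.rpow_neg hs0.le]
    congr 1
    linarith [hpq.mul_eq_add]
  have hC : 4 * (1 / (r * (1 - r))) ^ (1 / p) * (1 / (r ^ (1 - q) - 1)) ^ (1 / q)
      = 4 / ((1 - s ^ p) ^ (1 / p) * (1 - s ^ q) ^ (1 / q)) := by
    have hA : (1 / (r * (1 - r))) ^ (1 / p) = (s * (1 - s ^ p) ^ (1 / p))⁻¹ := by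
      rw [one_div, Real.inv_rpow (by nlinarith), Real.mul_rpow hr0.le (by linarith), hsp]
    have hB : (1 / (r ^ (1 - q) - 1)) ^ (1 / q) = s / (1 - s ^ q) ^ (1 / q) := by
      rw [hrq, show 1 / ((s ^ q)⁻¹ - 1) = s ^ q / (1 - s ^ q) by field_simp,
        Real.div_rpow (by positivity) (by linarith), ← Real.rpow_mul hs0.le,
        mul_one_div_cancel hpq.symm.ne_zero, Real.rpow_one]
    rw [hA, hB]
    field_simp
  have hD : 0 < (1 - s ^ p) ^ (1 / p) * (1 - s ^ q) ^ (1 / q) := by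
    have : s ^ p < 1 := by rw [hsp]; exact hr1
    apply mul_pos <;> apply Real.rpow_pos_of_pos <;> linarith
  rw [hC, inv_eq_one_div, div_le_div_iff₀ (by linarith) hD]
  linarith [hpq.one_sub_rpow_mul_one_sub_rpow_le hs0.le hs1.le]

theorem hardy_power_weights_general (γ p q β : ℝ) (hp : 1 < p)
    (hpq : 1 / p + 1 / q = 1) (hβ : (-γ - 1) / p < β) :
    let r : ℝ := 2 ^ (-p * β - γ - 1)
    let Cγ : ℝ := (1 - (2 : ℝ) ^ (-2 * (γ + 1))) / (γ + 1)
    let u : ℕ → ℝ := fun i => Cγ * r ^ (i : ℝ)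
    let C : ℝ := 4 * (1 / (r * (1 - r))) ^ (1 / p) * (1 / (r ^ (1 - q) - 1)) ^ (1 / q)
    ∀ d : ℕ → ℝ, (∀ n, 0 ≤ d n) →
      ∑' j : ℕ, ENNReal.ofReal (u (j + 1)) *
          ENNReal.ofReal (∑ i ∈ Finset.range (j + 1), d i) ^ p
        ≤ ENNReal.ofReal (C ^ p) *
          ∑' j : ℕ, ENNReal.ofReal (u (j + 1)) * ENNReal.ofReal (d j) ^ p := by
  intro r Cγ u C d hd
  have hpq' : p.HolderConjugate q :=
    Real.holderConjugate_iff.2 ⟨hp, by simpa only [one_div] using hpq⟩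
  have hr0 : 0 < r := by positivity
  have hr1 : r < 1 := Real.rpow_lt_one_of_one_lt_of_neg one_lt_two <| by
    linarith [(div_lt_iff₀ hpq'.pos).1 hβ]
  set ρ := ENNReal.ofReal r
  have hu (j : ℕ) : ENNReal.ofReal (u (j + 1)) = ENNReal.ofReal (Cγ * r) * ρ ^ j := by
    rw [← ENNReal.ofReal_pow hr0.le, ← ENNReal.ofReal_mul' (by positivity)]
    simp only [u, Real.rpow_natCast, pow_succ]
    congr 1
    ring
  have hC : ((1 - ρ ^ p⁻¹)⁻¹) ^ p ≤ ENNReal.ofReal (C ^ p) := by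
    have hs : 0 < 1 - r ^ p⁻¹ := sub_pos.2 (Real.rpow_lt_one hr0.le hr1 hpq'.inv_pos)
    rw [ENNReal.ofReal_rpow_of_nonneg hr0.le hpq'.inv_nonneg, ← ENNReal.ofReal_one,
      ← ENNReal.ofReal_sub _ (by positivity), ← ENNReal.ofReal_inv_of_pos hs,
      ENNReal.ofReal_rpow_of_nonneg (inv_pos.2 hs).le hpq'.nonneg]
    refine ENNReal.ofReal_le_ofReal (Real.rpow_le_rpow (inv_pos.2 hs).le ?_ hpq'.nonneg)
    simpa only [C, one_div] using hpq'.inv_one_sub_rpow_one_div_le hr0 hr1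
  calc ∑' j, ENNReal.ofReal (u (j + 1)) * ENNReal.ofReal (∑ i ∈ range (j + 1), d i) ^ p
      = ENNReal.ofReal (Cγ * r) *
          ∑' j, ρ ^ j * (∑ i ∈ range (j + 1), ENNReal.ofReal (d i)) ^ p := by
        simp_rw [hu, ENNReal.ofReal_sum_of_nonneg fun i _ => hd i, mul_assoc,
          ENNReal.tsum_mul_left]
    _ ≤ ENNReal.ofReal (Cγ * r) *
          (((1 - ρ ^ p⁻¹)⁻¹) ^ p * ∑' j, ρ ^ j * ENNReal.ofReal (d j) ^ p) := by
        gcongr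
        exact ENNReal.tsum_geometric_mul_sum_range_rpow_le hp.le ρ _
    _ ≤ ENNReal.ofReal (C ^ p) *
          ∑' j, ENNReal.ofReal (u (j + 1)) * ENNReal.ofReal (d j) ^ p := by
        simp_rw [hu, mul_assoc, ENNReal.tsum_mul_left, mul_left_comm (ENNReal.ofReal (Cγ * r))]
        gcongr

/-- The weighted discrete Hardy inequality for the geometric weights
`u_i = C_γ r^i`, `r = 2^{-pβ-γ-1}`, with the explicit constant
`C = 4 (1/(r(1-r)))^{1/p} (1/(r^{1-q}-1))^{1/q}`. Indexing: `d n` stands for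
`d_{n+1}` and `u (j+1) = C_γ r^{j+1}` is the weight of index `j+1 ≥ 1`. -/
theorem hardy_power_weights (γ p q β : ℝ) (hγ : 1 ≤ γ) (hp : 1 < p) (hq : 1 < q)
    (hpq : 1 / p + 1 / q = 1) (hβ : (-γ - 1) / p < β) :
    let r : ℝ := 2 ^ (-p * β - γ - 1)
    let Cγ : ℝ := (1 - (2 : ℝ) ^ (-2 * (γ + 1))) / (γ + 1)
    let u : ℕ → ℝ := fun i => Cγ * r ^ (i : ℝ)
    let C : ℝ := 4 * (1 / (r * (1 - r))) ^ (1 / p) * (1 / (r ^ (1 - q) - 1)) ^ (1 / q)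
    ∀ d : ℕ → ℝ, (∀ n, 0 ≤ d n) →
      ∑' j : ℕ, ENNReal.ofReal (u (j + 1)) *
          ENNReal.ofReal (∑ i ∈ Finset.range (j + 1), d i) ^ p
        ≤ ENNReal.ofReal (C ^ p) *
          ∑' j : ℕ, ENNReal.ofReal (u (j + 1)) * ENNReal.ofReal (d j) ^ p :=
  hardy_power_weights_general γ p q β hp hpq hβ
end

section
/- Andersen–Heinig sufficiency: let p, q > 1 with 1/p + 1/q = 1, and let (u_n), (v_n) be sequences of positive reals. If A := sup_{k≥1} (sum_{i=k}^∞ u_i)^{1/p} (sum_{i=1}^k v_i^{1-q})^{1/q} < ∞, then for every non-negative sequence (a_n), (sum_{n≥1} u_n (sum_{k=1}^n a_k)^p)^{1/p} ≤ 4A (sum_{n≥1} v_n a_n^p)^{1/p}. -/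
/-!
Write `U k = ∑_{i ≥ k} u_i` and `V k = ∑_{i ≤ k} v_i^{1-q}`, so that `U k^{1/p} V k^{1/q} ≤ A`.
Hölder's inequality with the weights `v_k V_k^{1/q}` gives
`(∑_{k ≤ n} a_k)^p ≤ (∑_{k ≤ n} v_k V_k^{1/q} a_k^p) (∑_{k ≤ n} v_k^{1-q} V_k^{-1/p})^{p-1}`,
and the last sum telescopes against the concave function `t ↦ t^{1/q}` to at most `q V_n^{1/q}`.
After exchanging the order of summation, the inner sums `∑_{n ≥ k} u_n U_n^{-1/q}` telescope in
the same way (now with `t ↦ t^{1/p}`) to at most `p U_k^{1/p}`. Using the condition twice yields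
the constant `p q^{p-1} A^p`, and `p q^{p-1} ≤ 2^p 2^p = 4^p` since `x < 2^x` for `x ≥ 1`.
-/

open Finset Real

theorem lt_two_rpow_self {x : ℝ} (hx : 1 ≤ x) : x < 2 ^ x := by
  have := one_add_mul_self_le_rpow_one_add (s := 1) (by norm_num) hx
  norm_num at this
  linarith

theorem Real.HolderConjugate.mul_rpow_sub_one_le_four_rpow {p q : ℝ} (hpq : p.HolderConjugate q) :
    p * q ^ (p - 1) ≤ 4 ^ p := by
  have hq : q ^ (p - 1) ≤ 2 ^ p := calc
    q ^ (p - 1) ≤ ((2 : ℝ) ^ q) ^ (p - 1) :=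
      rpow_le_rpow hpq.symm.nonneg (lt_two_rpow_self hpq.symm.lt.le).le hpq.sub_one_pos.le
    _ = 2 ^ p := by rw [← rpow_mul zero_le_two, mul_comm, hpq.sub_one_mul_conj]
  calc p * q ^ (p - 1) ≤ 2 ^ p * 2 ^ p :=
        mul_le_mul (lt_two_rpow_self hpq.lt.le).le hq (rpow_nonneg hpq.symm.nonneg _)
          (by positivity)
    _ = 4 ^ p := by rw [← mul_rpow zero_le_two zero_le_two]; norm_num

theorem mul_sub_mul_rpow_sub_one_le_rpow_sub_rpow {r a b : ℝ} (hr₀ : 0 ≤ r) (hr₁ : r ≤ 1)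
    (ha : 0 ≤ a) (hb : 0 < b) :
    r * (b - a) * b ^ (r - 1) ≤ b ^ r - a ^ r := by
  have h := rpow_one_add_le_one_add_mul_self (s := a / b - 1)
    (by linarith [div_nonneg ha hb.le]) hr₀ hr₁
  rw [add_sub_cancel, div_rpow ha hb.le, div_le_iff₀ (by positivity)] at h
  rw [rpow_sub_one hb.ne']
  have : (1 + r * (a / b - 1)) * b ^ r = b ^ r - r * (b - a) * (b ^ r / b) := by
    field_simp; ring
  linarith

theorem sum_range_mul_partialSum_rpow_sub_one_le {w : ℕ → ℝ} (hw : ∀ i, 0 < w i) {r : ℝ}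
    (hr₀ : 0 < r) (hr₁ : r ≤ 1) (n : ℕ) :
    ∑ k ∈ range (n + 1), w k * (∑ i ∈ range (k + 1), w i) ^ (r - 1)
      ≤ r⁻¹ * (∑ i ∈ range (n + 1), w i) ^ r := by
  set W : ℕ → ℝ := fun k => ∑ i ∈ range k, w i
  have hstep : ∀ k, w k * W (k + 1) ^ (r - 1) ≤ r⁻¹ * (W (k + 1) ^ r - W k ^ r) := by
    intro k
    have h := mul_sub_mul_rpow_sub_one_le_rpow_sub_rpow (a := W k) (b := W (k + 1)) hr₀.le hr₁
      (sum_nonneg fun i _ => (hw i).le) (sum_pos (fun i _ => hw i) nonempty_range_add_one)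
    rw [le_inv_mul_iff₀ hr₀, ← mul_assoc]
    simpa only [W, sum_range_succ, add_sub_cancel_left] using h
  calc ∑ k ∈ range (n + 1), w k * W (k + 1) ^ (r - 1)
      ≤ ∑ k ∈ range (n + 1), r⁻¹ * (W (k + 1) ^ r - W k ^ r) := sum_le_sum fun k _ => hstep k
    _ = r⁻¹ * W (n + 1) ^ r := by
      rw [← mul_sum, sum_range_sub (fun k => W k ^ r)]
      simp [W, zero_rpow hr₀.ne']

theorem sum_Ico_mul_tsum_rpow_sub_one_le {u : ℕ → ℝ} (hu : ∀ n, 0 < u n) (hs : Summable u)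
    {r : ℝ} (hr₀ : 0 < r) (hr₁ : r ≤ 1) {k N : ℕ} (hkN : k ≤ N) :
    ∑ n ∈ Ico k N, u n * (∑' i, u (n + i)) ^ (r - 1) ≤ r⁻¹ * (∑' i, u (k + i)) ^ r := by
  set U : ℕ → ℝ := fun n => ∑' i, u (n + i)
  have htail : ∀ n, Summable fun i => u (n + i) := fun n =>
    hs.comp_injective (add_right_injective n)
  have hU : ∀ n, U n = u n + U (n + 1) := fun n => by
    simpa only [U, add_zero, add_assoc, add_comm 1] using (htail n).tsum_eq_zero_add
  have hUnonneg : ∀ n, 0 ≤ U n := fun n => tsum_nonneg fun i => (hu _).le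
  have hstep : ∀ n, u n * U n ^ (r - 1) ≤ r⁻¹ * (U n ^ r - U (n + 1) ^ r) := by
    intro n
    have h := mul_sub_mul_rpow_sub_one_le_rpow_sub_rpow (b := U n) hr₀.le hr₁ (hUnonneg (n + 1))
      (by rw [hU n]; linarith [hu n, hUnonneg (n + 1)])
    rw [le_inv_mul_iff₀ hr₀, ← mul_assoc]
    rwa [hU n, add_sub_cancel_right, ← hU n] at h
  calc ∑ n ∈ Ico k N, u n * U n ^ (r - 1)
      ≤ ∑ n ∈ Ico k N, r⁻¹ * (U n ^ r - U (n + 1) ^ r) := sum_le_sum fun n _ => hstep n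
    _ = r⁻¹ * (U k ^ r - U N ^ r) := by
      rw [← mul_sum, ← neg_sub, ← sum_Ico_sub (fun n => U n ^ r) hkN, ← sum_neg_distrib]
      simp only [neg_sub]
    _ ≤ r⁻¹ * U k ^ r := by
      gcongr
      linarith [rpow_nonneg (hUnonneg N) r]

theorem rpow_sum_le_sum_mul_rpow_mul_sum_rpow {ι : Type*} (s : Finset ι) {p q : ℝ}
    (hpq : p.HolderConjugate q) {c a : ι → ℝ} (hc : ∀ i, 0 < c i) (ha : ∀ i, 0 ≤ a i) :
    (∑ i ∈ s, a i) ^ p ≤ (∑ i ∈ s, c i * a i ^ p) * (∑ i ∈ s, c i ^ (1 - q)) ^ (p - 1) := by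
  -- Weighted Hölder with weights `c ^ (1 - q)`; the exponents match because `(p - 1)(q - 1) = 1`.
  have h := inner_le_weight_mul_Lp_of_nonneg s hpq.lt.le (fun i => c i ^ (1 - q))
    (fun i => a i * c i ^ (q - 1)) (fun i => (rpow_pos_of_pos (hc i) _).le)
    (fun i => mul_nonneg (ha i) (rpow_pos_of_pos (hc i) _).le)
  have hwf : ∀ i, c i ^ (1 - q) * (a i * c i ^ (q - 1)) = a i := fun i => by
    rw [mul_left_comm, ← rpow_add (hc i)]; simp
  have hwfp : ∀ i, c i ^ (1 - q) * (a i * c i ^ (q - 1)) ^ p = c i * a i ^ p := fun i => by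
    rw [mul_rpow (ha i) (rpow_pos_of_pos (hc i) _).le, ← rpow_mul (hc i).le, mul_left_comm,
      ← rpow_add (hc i)]
    have : 1 - q + (q - 1) * p = 1 := by linear_combination hpq.mul_eq_add
    rw [this, rpow_one, mul_comm]
  simp only [hwf, hwfp] at h
  have hw : 0 ≤ ∑ i ∈ s, c i ^ (1 - q) := sum_nonneg fun i _ => (rpow_pos_of_pos (hc i) _).le
  have hca : 0 ≤ ∑ i ∈ s, c i * a i ^ p :=
    sum_nonneg fun i _ => mul_nonneg (hc i).le (rpow_nonneg (ha i) _)
  calc (∑ i ∈ s, a i) ^ p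
      ≤ ((∑ i ∈ s, c i ^ (1 - q)) ^ (1 - p⁻¹) * (∑ i ∈ s, c i * a i ^ p) ^ p⁻¹) ^ p :=
        rpow_le_rpow (sum_nonneg fun i _ => ha i) h hpq.nonneg
    _ = _ := by
      rw [mul_rpow (rpow_nonneg hw _) (rpow_nonneg hca _), ← rpow_mul hw,
        ← rpow_mul hca, inv_mul_cancel₀ hpq.ne_zero, rpow_one, mul_comm]
      congr 2
      field_simp [hpq.ne_zero]

section HardyWeights

/-! `U` and `V` play the roles of the tail sums `∑_{i ≥ n} u_i` and the partial sums
`∑_{i ≤ n} v_i^{1-q}`. -/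

variable {p q A : ℝ} {u v a U V : ℕ → ℝ}

theorem rpow_sum_range_le_mul_sum_range (hpq : p.HolderConjugate q) (hv : ∀ k, 0 < v k)
    (hV : ∀ k, 0 < V k) (ha : ∀ k, 0 ≤ a k) {n : ℕ} (hUn : 0 < U n)
    (hA : U n ^ p⁻¹ * V n ^ q⁻¹ ≤ A)
    (hVtel : ∑ k ∈ range (n + 1), v k ^ (1 - q) * V k ^ (-p⁻¹) ≤ q * V n ^ q⁻¹) :
    (∑ k ∈ range (n + 1), a k) ^ p
      ≤ (q * A) ^ (p - 1) * U n ^ (-q⁻¹) * ∑ k ∈ range (n + 1), v k * V k ^ q⁻¹ * a k ^ p := by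
  have hc : ∀ k, 0 < v k * V k ^ q⁻¹ := fun k => mul_pos (hv k) (rpow_pos_of_pos (hV k) _)
  have hc_rpow : ∀ k, (v k * V k ^ q⁻¹) ^ (1 - q) = v k ^ (1 - q) * V k ^ (-p⁻¹) := fun k => by
    rw [mul_rpow (hv k).le (rpow_pos_of_pos (hV k) _).le, ← rpow_mul (hV k).le, mul_sub, mul_one,
      inv_mul_cancel₀ hpq.symm.ne_zero, hpq.symm.inv_sub_one]
  have hVA : V n ^ q⁻¹ ≤ A * U n ^ (-p⁻¹) := by
    rw [rpow_neg hUn.le, ← div_eq_mul_inv, le_div_iff₀ (rpow_pos_of_pos hUn _), mul_comm]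
    exact hA
  have hA₀ : 0 ≤ A :=
    le_trans (mul_nonneg (rpow_nonneg hUn.le _) (rpow_nonneg (hV n).le _)) hA
  calc (∑ k ∈ range (n + 1), a k) ^ p
      ≤ (∑ k ∈ range (n + 1), v k * V k ^ q⁻¹ * a k ^ p) *
          (∑ k ∈ range (n + 1), (v k * V k ^ q⁻¹) ^ (1 - q)) ^ (p - 1) :=
        rpow_sum_le_sum_mul_rpow_mul_sum_rpow _ hpq hc ha
    _ ≤ (∑ k ∈ range (n + 1), v k * V k ^ q⁻¹ * a k ^ p) *
          (q * A * U n ^ (-p⁻¹)) ^ (p - 1) := by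
      simp only [hc_rpow]
      gcongr
      · exact sum_nonneg fun k _ => mul_nonneg (hc k).le (rpow_nonneg (ha k) _)
      · exact sum_nonneg fun k _ => hc_rpow k ▸ (rpow_pos_of_pos (hc k) _).le
      · exact hpq.sub_one_pos.le
      · rw [mul_assoc]
        exact hVtel.trans (mul_le_mul_of_nonneg_left hVA hpq.symm.nonneg)
    _ = (q * A) ^ (p - 1) * U n ^ (-q⁻¹) * ∑ k ∈ range (n + 1), v k * V k ^ q⁻¹ * a k ^ p := by
      rw [mul_rpow (mul_nonneg hpq.symm.nonneg hA₀) (rpow_nonneg hUn.le _), ← rpow_mul hUn.le]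
      have : -p⁻¹ * (p - 1) = -q⁻¹ := by
        rw [← hpq.one_sub_inv]; field_simp [hpq.ne_zero]
      rw [this, mul_comm]

theorem sum_range_mul_rpow_sum_range_le (hpq : p.HolderConjugate q) (hu : ∀ n, 0 ≤ u n)
    (hv : ∀ k, 0 < v k) (ha : ∀ k, 0 ≤ a k) (hU : ∀ n, 0 < U n) (hV : ∀ k, 0 < V k)
    (hA : ∀ n, U n ^ p⁻¹ * V n ^ q⁻¹ ≤ A)
    (hUtel : ∀ k N, k ≤ N → ∑ n ∈ Ico k N, u n * U n ^ (-q⁻¹) ≤ p * U k ^ p⁻¹)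
    (hVtel : ∀ n, ∑ k ∈ range (n + 1), v k ^ (1 - q) * V k ^ (-p⁻¹) ≤ q * V n ^ q⁻¹) (N : ℕ) :
    ∑ n ∈ range N, u n * (∑ k ∈ range (n + 1), a k) ^ p
      ≤ p * q ^ (p - 1) * A ^ p * ∑ k ∈ range N, v k * a k ^ p := by
  set c : ℕ → ℝ := fun k => v k * V k ^ q⁻¹ * a k ^ p
  have hc : ∀ k, 0 ≤ c k := fun k =>
    mul_nonneg (mul_nonneg (hv k).le (rpow_nonneg (hV k).le _)) (rpow_nonneg (ha k) _)
  have hA₀ : 0 < A := lt_of_lt_of_le (by have := hU 0; have := hV 0; positivity) (hA 0)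
  have hUA : ∀ k, U k ^ p⁻¹ ≤ A * V k ^ (-q⁻¹) := fun k => by
    rw [rpow_neg (hV k).le, ← div_eq_mul_inv, le_div_iff₀ (rpow_pos_of_pos (hV k) _)]
    exact hA k
  have hterm : ∀ n, u n * (∑ k ∈ range (n + 1), a k) ^ p
      ≤ (q * A) ^ (p - 1) * ∑ k ∈ range (n + 1), c k * (u n * U n ^ (-q⁻¹)) := fun n => by
    have h := rpow_sum_range_le_mul_sum_range hpq hv hV ha (hU n) (hA n) (hVtel n)
    calc u n * (∑ k ∈ range (n + 1), a k) ^ p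
        ≤ u n * ((q * A) ^ (p - 1) * U n ^ (-q⁻¹) * ∑ k ∈ range (n + 1), c k) :=
          mul_le_mul_of_nonneg_left h (hu n)
      _ = _ := by rw [← sum_mul]; ring
  calc ∑ n ∈ range N, u n * (∑ k ∈ range (n + 1), a k) ^ p
      ≤ ∑ n ∈ range N, (q * A) ^ (p - 1) * ∑ k ∈ range (n + 1), c k * (u n * U n ^ (-q⁻¹)) :=
        sum_le_sum fun n _ => hterm n
    _ = (q * A) ^ (p - 1) * ∑ k ∈ range N, c k * ∑ n ∈ Ico k N, u n * U n ^ (-q⁻¹) := by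
      simp only [← mul_sum, range_eq_Ico]
      rw [← sum_Ico_Ico_comm]
      simp only [mul_sum]
    _ ≤ (q * A) ^ (p - 1) * ∑ k ∈ range N, c k * (p * (A * V k ^ (-q⁻¹))) := by
      refine mul_le_mul_of_nonneg_left (sum_le_sum fun k hk => ?_)
        (rpow_nonneg (mul_nonneg hpq.symm.nonneg hA₀.le) _)
      exact mul_le_mul_of_nonneg_left ((hUtel k N (mem_range.1 hk).le).trans
        (mul_le_mul_of_nonneg_left (hUA k) hpq.nonneg)) (hc k)
    _ = p * q ^ (p - 1) * A ^ p * ∑ k ∈ range N, v k * a k ^ p := by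
      have hcV : ∀ k, c k * (p * (A * V k ^ (-q⁻¹))) = p * A * (v k * a k ^ p) := fun k => by
        simp only [c, rpow_neg (hV k).le]
        field_simp [(rpow_pos_of_pos (hV k) q⁻¹).ne']
      rw [sum_congr rfl fun k _ => hcV k, ← mul_sum, mul_rpow hpq.symm.nonneg hA₀.le,
        rpow_sub_one hA₀.ne']
      field_simp

end HardyWeights

theorem hardy_sum_range_le {p q A : ℝ} {u v a : ℕ → ℝ} (hpq : p.HolderConjugate q)
    (hu : ∀ n, 0 < u n) (hv : ∀ n, 0 < v n) (hs : Summable u)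
    (hA : ∀ k, (∑' i, u (k + i)) ^ p⁻¹ * (∑ i ∈ range (k + 1), v i ^ (1 - q)) ^ q⁻¹ ≤ A)
    (ha : ∀ n, 0 ≤ a n) (N : ℕ) :
    ∑ n ∈ range N, u n * (∑ k ∈ range (n + 1), a k) ^ p
      ≤ p * q ^ (p - 1) * A ^ p * ∑ k ∈ range N, v k * a k ^ p := by
  have hUpos : ∀ n, 0 < ∑' i, u (n + i) := fun n =>
    (hs.comp_injective (add_right_injective n)).tsum_pos (fun i => (hu _).le) 0 (hu _)
  have hVpos : ∀ k, 0 < ∑ i ∈ range (k + 1), v i ^ (1 - q) := fun k =>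
    sum_pos (fun i _ => rpow_pos_of_pos (hv i) _) nonempty_range_add_one
  refine sum_range_mul_rpow_sum_range_le hpq (fun n => (hu n).le) hv ha hUpos hVpos hA
    (fun k N hkN => ?_) (fun n => ?_) N
  · simpa only [hpq.inv_sub_one, inv_inv] using sum_Ico_mul_tsum_rpow_sub_one_le hu hs
      hpq.inv_pos (inv_le_one_of_one_le₀ hpq.lt.le) hkN
  · simpa only [hpq.symm.inv_sub_one, inv_inv] using sum_range_mul_partialSum_rpow_sub_one_le
      (fun i => rpow_pos_of_pos (hv i) (1 - q)) hpq.symm.inv_pos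
      (inv_le_one_of_one_le₀ hpq.symm.lt.le) n

theorem summable_of_tsum_ofReal_ne_top {ι : Type*} {f : ι → ℝ} (hf : ∀ i, 0 ≤ f i)
    (h : ∑' i, ENNReal.ofReal (f i) ≠ ⊤) : Summable f :=
  (ENNReal.summable_toReal h).congr fun i => ENNReal.toReal_ofReal (hf i)

theorem summable_and_tsum_rpow_mul_rpow_le_of_ofReal {u w : ℕ → ℝ} (hu : ∀ n, 0 < u n)
    (hw : ∀ k, 0 < w k) {r s A : ℝ} (hr : 0 < r) (hs : 0 ≤ s)
    (h : ∀ k, (∑' i, ENNReal.ofReal (u (k + i))) ^ r * ENNReal.ofReal (w k) ^ s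
      ≤ ENNReal.ofReal A) :
    Summable u ∧ ∀ k, (∑' i, u (k + i)) ^ r * w k ^ s ≤ A := by
  have hw' : ∀ k, ENNReal.ofReal (w k) ^ s ≠ 0 := fun k =>
    (ENNReal.rpow_pos (ENNReal.ofReal_pos.2 (hw k)) ENNReal.ofReal_ne_top).ne'
  have hsum : Summable u := summable_of_tsum_ofReal_ne_top (fun n => (hu n).le) fun htop => by
    have h₀ := h 0
    simp only [zero_add] at h₀
    rw [htop, ENNReal.top_rpow_of_pos hr, ENNReal.top_mul (hw' 0), top_le_iff] at h₀
    exact ENNReal.ofReal_ne_top h₀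
  refine ⟨hsum, fun k => ?_⟩
  have htail : Summable fun i => u (k + i) := hsum.comp_injective (add_right_injective k)
  have hU : 0 < ∑' i, u (k + i) := htail.tsum_pos (fun i => (hu _).le) 0 (hu _)
  have hk := h k
  rw [← ENNReal.ofReal_tsum_of_nonneg (fun i => (hu _).le) htail,
    ENNReal.ofReal_rpow_of_nonneg hU.le hr.le, ENNReal.ofReal_rpow_of_nonneg (hw k).le hs,
    ← ENNReal.ofReal_mul (rpow_nonneg hU.le _), ENNReal.ofReal_le_ofReal_iff'] at hk
  exact hk.resolve_right (not_le.2 (mul_pos (rpow_pos_of_pos hU _) (rpow_pos_of_pos (hw k) _)))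

theorem ENNReal.ofReal_mul_ofReal_rpow {x y p : ℝ} (hx : 0 ≤ x) (hy : 0 ≤ y) (hp : 0 ≤ p) :
    ENNReal.ofReal x * ENNReal.ofReal y ^ p = ENNReal.ofReal (x * y ^ p) := by
  rw [ENNReal.ofReal_rpow_of_nonneg hy hp, ENNReal.ofReal_mul hx]

theorem ENNReal.tsum_ofReal_le_ofReal_mul_tsum_ofReal {f g : ℕ → ℝ} {C : ℝ}
    (hf : ∀ n, 0 ≤ f n) (hg : ∀ n, 0 ≤ g n) (hC : 0 ≤ C)
    (h : ∀ N, ∑ n ∈ range N, f n ≤ C * ∑ n ∈ range N, g n) :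
    ∑' n, ENNReal.ofReal (f n) ≤ ENNReal.ofReal C * ∑' n, ENNReal.ofReal (g n) :=
  ENNReal.tsum_le_of_sum_range_le fun N => calc
    ∑ n ∈ range N, ENNReal.ofReal (f n) = ENNReal.ofReal (∑ n ∈ range N, f n) :=
      (ENNReal.ofReal_sum_of_nonneg fun n _ => hf n).symm
    _ ≤ ENNReal.ofReal C * ENNReal.ofReal (∑ n ∈ range N, g n) := by
      rw [← ENNReal.ofReal_mul hC]; exact ENNReal.ofReal_le_ofReal (h N)
    _ ≤ ENNReal.ofReal C * ∑' n, ENNReal.ofReal (g n) := by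
      rw [ENNReal.ofReal_sum_of_nonneg fun n _ => hg n]
      gcongr
      exact ENNReal.sum_le_tsum _

theorem ENNReal.rpow_one_div_le_ofReal_mul_of_le_ofReal_rpow_mul {X Y : ENNReal} {C p : ℝ}
    (hC : 0 ≤ C) (hp : 0 < p) (h : X ≤ ENNReal.ofReal (C ^ p) * Y) :
    X ^ (1 / p) ≤ ENNReal.ofReal C * Y ^ (1 / p) := calc
  X ^ (1 / p) ≤ (ENNReal.ofReal (C ^ p) * Y) ^ (1 / p) := ENNReal.rpow_le_rpow h (by positivity)
  _ = ENNReal.ofReal C * Y ^ (1 / p) := by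
    rw [ENNReal.mul_rpow_of_nonneg _ _ (by positivity),
      ENNReal.ofReal_rpow_of_nonneg (rpow_nonneg hC p) (by positivity), ← Real.rpow_mul hC,
      mul_one_div_cancel hp.ne', Real.rpow_one]

theorem andersen_heinig_sufficiency_general (p q : ℝ) (hp : 1 < p)
    (hpq : 1 / p + 1 / q = 1) (u v : ℕ → ℝ) (hu : ∀ n, 0 < u n) (hv : ∀ n, 0 < v n)
    (A : ℝ)
    (hAH : ∀ k : ℕ,
      (∑' i : ℕ, ENNReal.ofReal (u (k + i))) ^ (1 / p) *
          ENNReal.ofReal (∑ i ∈ Finset.range (k + 1), v i ^ (1 - q)) ^ (1 / q)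
        ≤ ENNReal.ofReal A) :
    ∀ a : ℕ → ℝ, (∀ n, 0 ≤ a n) →
      (∑' n : ℕ, ENNReal.ofReal (u n) *
          ENNReal.ofReal (∑ k ∈ Finset.range (n + 1), a k) ^ p) ^ (1 / p)
        ≤ ENNReal.ofReal (4 * A) *
          (∑' n : ℕ, ENNReal.ofReal (v n) * ENNReal.ofReal (a n) ^ p) ^ (1 / p) := by
  intro a ha
  have hpq' : p.HolderConjugate q :=
    Real.holderConjugate_iff.2 ⟨hp, by simpa only [one_div] using hpq⟩
  have hV : ∀ k, 0 < ∑ i ∈ range (k + 1), v i ^ (1 - q) := fun k =>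
    sum_pos (fun i _ => rpow_pos_of_pos (hv i) _) nonempty_range_add_one
  obtain ⟨hs, hA⟩ := summable_and_tsum_rpow_mul_rpow_le_of_ofReal hu hV hpq'.one_div_pos
    hpq'.symm.one_div_nonneg hAH
  simp only [one_div] at hA
  have hA₀ : 0 ≤ A := (mul_nonneg (rpow_nonneg (tsum_nonneg fun i => (hu (0 + i)).le) _)
    (rpow_nonneg (hV 0).le _)).trans (hA 0)
  have h4A : 0 ≤ 4 * A := by positivity
  have hS : ∀ n, 0 ≤ ∑ k ∈ range (n + 1), a k := fun n => sum_nonneg fun k _ => ha k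
  simp only [ENNReal.ofReal_mul_ofReal_rpow (hu _).le (hS _) hpq'.nonneg,
    ENNReal.ofReal_mul_ofReal_rpow (hv _).le (ha _) hpq'.nonneg]
  refine ENNReal.rpow_one_div_le_ofReal_mul_of_le_ofReal_rpow_mul h4A hpq'.pos
    (ENNReal.tsum_ofReal_le_ofReal_mul_tsum_ofReal
      (fun n => mul_nonneg (hu n).le (rpow_nonneg (hS n) p))
      (fun n => mul_nonneg (hv n).le (rpow_nonneg (ha n) p)) (rpow_nonneg h4A p) fun N =>
        (hardy_sum_range_le hpq' hu hv hs hA ha N).trans ?_)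
  rw [mul_rpow zero_le_four hA₀]
  gcongr
  · exact sum_nonneg fun k _ => mul_nonneg (hv k).le (rpow_nonneg (ha k) p)
  · exact Real.HolderConjugate.mul_rpow_sub_one_le_four_rpow hpq'

/-- Andersen–Heinig sufficiency: if the quantity
`A = sup_k (∑_{i=k}^∞ u_i)^{1/p} (∑_{i=1}^k v_i^{1-q})^{1/q}` is finite (bounded by the
real number `A`), then the weighted discrete Hardy inequality holds with constant `4A`.
Indexing: `u n`, `v n`, `a n` stand for the terms of index `n+1 ≥ 1`; the tail sum
`∑_{i=k}^∞ u_i` is `∑' i, u (k + i)` (over indices shifted by one) and may a priori be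
infinite, hence is taken in `[0,∞]`. -/
theorem andersen_heinig_sufficiency (p q : ℝ) (hp : 1 < p) (hq : 1 < q)
    (hpq : 1 / p + 1 / q = 1) (u v : ℕ → ℝ) (hu : ∀ n, 0 < u n) (hv : ∀ n, 0 < v n)
    (A : ℝ) (hA : 0 ≤ A)
    (hAH : ∀ k : ℕ,
      (∑' i : ℕ, ENNReal.ofReal (u (k + i))) ^ (1 / p) *
          ENNReal.ofReal (∑ i ∈ Finset.range (k + 1), v i ^ (1 - q)) ^ (1 / q)
        ≤ ENNReal.ofReal A) :
    ∀ a : ℕ → ℝ, (∀ n, 0 ≤ a n) →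
      (∑' n : ℕ, ENNReal.ofReal (u n) *
          ENNReal.ofReal (∑ k ∈ Finset.range (n + 1), a k) ^ p) ^ (1 / p)
        ≤ ENNReal.ofReal (4 * A) *
          (∑' n : ℕ, ENNReal.ofReal (v n) * ENNReal.ofReal (a n) ^ p) ^ (1 / p) :=
  andersen_heinig_sufficiency_general p q hp hpq u v hu hv A hAH
end

section
/- Andersen–Heinig necessity: let p, q > 1 with 1/p + 1/q = 1, let (u_n), (v_n) be positive sequences, and suppose C > 0 is such that (sum_{n≥1} u_n (sum_{k=1}^n a_k)^p)^{1/p} ≤ C (sum_{n≥1} v_n a_n^p)^{1/p} for every non-negative sequence (a_n). Then for every k ≥ 1, (sum_{i=k}^∞ u_i)^{1/p} (sum_{i=1}^k v_i^{1-q})^{1/q} ≤ C. -/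
/-!
Test the Hardy inequality against the extremal sequence `a_n = v_n^{1-q}` for `n ≤ k`,
`a_n = 0` afterwards. Since `(1 - q) p = -q`, the right-hand side becomes
`C S^{1/p}` with `S = ∑_{n ≤ k} v_n^{1-q}`, while every partial sum `∑_{j ≤ n} a_j` with
`n ≥ k` equals `S`, so the left-hand side is at least `(∑_{n ≥ k} u_n)^{1/p} S`.
Dividing by `S^{1/p}` and using `1 - 1/p = 1/q` gives the bound.
-/

open Finset

theorem Finset.sum_range_succ_ite_le {M : Type*} [AddCommMonoid M] (f : ℕ → M) {k n : ℕ}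
    (hkn : k ≤ n) :
    ∑ j ∈ range (n + 1), (if j ≤ k then f j else 0) = ∑ j ∈ range (k + 1), f j := by
  rw [← sum_filter]
  congr 1
  ext j
  simp only [mem_filter, mem_range]
  omega

theorem Real.HolderConjugate.mul_rpow_one_sub_rpow {p q x : ℝ} (h : p.HolderConjugate q)
    (hx : 0 < x) : x * (x ^ (1 - q)) ^ p = x ^ (1 - q) := by
  rw [← Real.rpow_mul hx.le]
  nth_rw 1 [← Real.rpow_one x]
  rw [← Real.rpow_add hx]
  congr 1
  linear_combination -h.mul_eq_add

theorem ENNReal.mul_rpow_le_of_mul_le_mul_rpow {p q : ℝ} (h : p.HolderConjugate q)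
    {X c T : ENNReal} (hT₀ : T ≠ 0) (hT : T ≠ ⊤) (hle : X * T ≤ c * T ^ (1 / p)) :
    X * T ^ (1 / q) ≤ c := by
  have hsplit : T = T ^ (1 / q) * T ^ (1 / p) := by
    rw [← ENNReal.rpow_add _ _ hT₀ hT, add_comm, h.one_div_add_one_div, div_one,
      ENNReal.rpow_one]
  nth_rw 1 [hsplit] at hle
  rw [← mul_assoc] at hle
  exact (ENNReal.mul_le_mul_iff_left (ENNReal.rpow_pos (pos_iff_ne_zero.2 hT₀) hT).ne'
    (ENNReal.rpow_ne_top_of_nonneg h.one_div_nonneg hT)).mp hle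

noncomputable def truncDualWeight (v : ℕ → ℝ) (q : ℝ) (k n : ℕ) : ℝ :=
  if n ≤ k then v n ^ (1 - q) else 0

theorem truncDualWeight_nonneg {v : ℕ → ℝ} (hv : ∀ n, 0 ≤ v n) (q : ℝ) (k n : ℕ) :
    0 ≤ truncDualWeight v q k n := by
  unfold truncDualWeight
  split_ifs
  exacts [Real.rpow_nonneg (hv n) _, le_rfl]

theorem tsum_ofReal_mul_ofReal_truncDualWeight_rpow {p q : ℝ} (h : p.HolderConjugate q)
    {v : ℕ → ℝ} (hv : ∀ n, 0 < v n) (k : ℕ) :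
    ∑' n, ENNReal.ofReal (v n) * ENNReal.ofReal (truncDualWeight v q k n) ^ p
      = ENNReal.ofReal (∑ i ∈ range (k + 1), v i ^ (1 - q)) := by
  have hterm (n : ℕ) : ENNReal.ofReal (v n) * ENNReal.ofReal (truncDualWeight v q k n) ^ p
      = ENNReal.ofReal (truncDualWeight v q k n) := by
    unfold truncDualWeight
    split_ifs
    · rw [ENNReal.ofReal_rpow_of_nonneg (Real.rpow_nonneg (hv n).le _) h.nonneg,
        ← ENNReal.ofReal_mul (hv n).le, h.mul_rpow_one_sub_rpow (hv n)]
    · simp [ENNReal.zero_rpow_of_pos h.pos]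
  simp_rw [hterm]
  rw [tsum_eq_sum (s := range (k + 1)) (fun n hn => by
      rw [truncDualWeight, if_neg (by simp only [mem_range] at hn; omega), ENNReal.ofReal_zero]),
    ← ENNReal.ofReal_sum_of_nonneg (fun n _ => truncDualWeight_nonneg (fun n => (hv n).le) q k n)]
  simp only [truncDualWeight, sum_range_succ_ite_le _ le_rfl]

theorem tsum_tail_mul_rpow_le_tsum_partialSum_truncDualWeight (u v : ℕ → ℝ)
    (p q : ℝ) (k : ℕ) :
    (∑' i, ENNReal.ofReal (u (k + i))) * ENNReal.ofReal (∑ i ∈ range (k + 1), v i ^ (1 - q)) ^ p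
      ≤ ∑' n, ENNReal.ofReal (u n) *
          ENNReal.ofReal (∑ j ∈ range (n + 1), truncDualWeight v q k j) ^ p := by
  rw [← ENNReal.tsum_mul_right]
  refine le_of_eq_of_le (tsum_congr fun i => ?_)
    (ENNReal.tsum_comp_le_tsum_of_injective (add_right_injective k) _)
  simp only [truncDualWeight, sum_range_succ_ite_le _ (Nat.le_add_right k i)]

theorem andersen_heinig_necessity_general (p q : ℝ) (hp : 1 < p)
    (hpq : 1 / p + 1 / q = 1) (u v : ℕ → ℝ) (hv : ∀ n, 0 < v n)
    (C : ℝ)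
    (hHardy : ∀ a : ℕ → ℝ, (∀ n, 0 ≤ a n) →
      (∑' n : ℕ, ENNReal.ofReal (u n) *
          ENNReal.ofReal (∑ k ∈ Finset.range (n + 1), a k) ^ p) ^ (1 / p)
        ≤ ENNReal.ofReal C *
          (∑' n : ℕ, ENNReal.ofReal (v n) * ENNReal.ofReal (a n) ^ p) ^ (1 / p)) :
    ∀ k : ℕ,
      (∑' i : ℕ, ENNReal.ofReal (u (k + i))) ^ (1 / p) *
          ENNReal.ofReal (∑ i ∈ Finset.range (k + 1), v i ^ (1 - q)) ^ (1 / q)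
        ≤ ENNReal.ofReal C := by
  intro k
  have hconj : p.HolderConjugate q := Real.holderConjugate_iff.mpr ⟨hp, by simpa using hpq⟩
  set S := ∑ i ∈ range (k + 1), v i ^ (1 - q)
  have hS : 0 < S := sum_pos (fun i _ => Real.rpow_pos_of_pos (hv i) _) nonempty_range_add_one
  have hTest := hHardy (truncDualWeight v q k) (truncDualWeight_nonneg (fun n => (hv n).le) q k)
  rw [tsum_ofReal_mul_ofReal_truncDualWeight_rpow hconj hv] at hTest
  refine ENNReal.mul_rpow_le_of_mul_le_mul_rpow hconj (ENNReal.ofReal_pos.2 hS).ne'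
    ENNReal.ofReal_ne_top (le_trans ?_ hTest)
  calc (∑' i, ENNReal.ofReal (u (k + i))) ^ (1 / p) * ENNReal.ofReal S
      = ((∑' i, ENNReal.ofReal (u (k + i))) * ENNReal.ofReal S ^ p) ^ (1 / p) := by
        rw [ENNReal.mul_rpow_of_nonneg _ _ hconj.one_div_nonneg, ← ENNReal.rpow_mul,
          mul_one_div_cancel hconj.ne_zero, ENNReal.rpow_one]
    _ ≤ _ := ENNReal.rpow_le_rpow
        (tsum_tail_mul_rpow_le_tsum_partialSum_truncDualWeight u v p q k)
        hconj.one_div_nonneg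

/-- Andersen–Heinig necessity: if the weighted discrete Hardy inequality holds with
constant `C` for every non-negative sequence, then the Andersen–Heinig quantity is
bounded by `C`. Indexing as in the sufficiency statement: index `n : ℕ` stands for
`n+1 ≥ 1`. -/
theorem andersen_heinig_necessity (p q : ℝ) (hp : 1 < p) (hq : 1 < q)
    (hpq : 1 / p + 1 / q = 1) (u v : ℕ → ℝ) (hu : ∀ n, 0 < u n) (hv : ∀ n, 0 < v n)
    (C : ℝ) (hC : 0 < C)
    (hHardy : ∀ a : ℕ → ℝ, (∀ n, 0 ≤ a n) →
      (∑' n : ℕ, ENNReal.ofReal (u n) *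
          ENNReal.ofReal (∑ k ∈ Finset.range (n + 1), a k) ^ p) ^ (1 / p)
        ≤ ENNReal.ofReal C *
          (∑' n : ℕ, ENNReal.ofReal (v n) * ENNReal.ofReal (a n) ^ p) ^ (1 / p)) :
    ∀ k : ℕ,
      (∑' i : ℕ, ENNReal.ofReal (u (k + i))) ^ (1 / p) *
          ENNReal.ofReal (∑ i ∈ Finset.range (k + 1), v i ^ (1 - q)) ^ (1 / q)
        ≤ ENNReal.ofReal C :=
  andersen_heinig_necessity_general p q hp hpq u v hv C hHardy
end

section
/- Let r ∈ (0,1) and a > 0, and set f(t) = r^t (1 + t ln 2)^a. Then there exists k₀ ∈ ℕ such that for all integers k ≥ k₀, sum_{i=k}^∞ r^i (1 + i ln 2)^a ≤ (-2 r^{k-1} / ln r) · (1 + k ln 2)^a. -/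
/-! The terms `u n = r ^ n (1 + n ln 2) ^ a` satisfy `u (n + 1) / u n → r`, so for any
`ρ ∈ (r, 1)` the tail from a large enough `k` is dominated by the geometric series
`u k ∑ ρ ^ i = u k / (1 - ρ)`. The choice `ρ = 1 + r ln r / 2` turns this into the stated
bound, and `r < ρ` because `r ln r ≥ r - 1 > 2 (r - 1)`. -/

open Filter Topology

lemma le_mul_pow_of_succ_le_mul {u : ℕ → ℝ} {ρ : ℝ} {k : ℕ} (hρ : 0 ≤ ρ)
    (hu : ∀ n, k ≤ n → u (n + 1) ≤ ρ * u n) (i : ℕ) : u (k + i) ≤ u k * ρ ^ i := by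
  induction i with
  | zero => simp
  | succ i ih =>
    calc u (k + (i + 1)) ≤ ρ * u (k + i) := hu (k + i) (Nat.le_add_right k i)
      _ ≤ ρ * (u k * ρ ^ i) := mul_le_mul_of_nonneg_left ih hρ
      _ = u k * ρ ^ (i + 1) := by ring

lemma tsum_add_le_div_one_sub_of_succ_le_mul {u : ℕ → ℝ} {ρ : ℝ} {k : ℕ}
    (hu0 : ∀ n, 0 ≤ u n) (hρ0 : 0 ≤ ρ) (hρ1 : ρ < 1)
    (hu : ∀ n, k ≤ n → u (n + 1) ≤ ρ * u n) :
    ∑' i, u (k + i) ≤ u k / (1 - ρ) := by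
  have hbound := le_mul_pow_of_succ_le_mul hρ0 hu
  have hgeom : Summable fun i => u k * ρ ^ i :=
    (summable_geometric_of_lt_one hρ0 hρ1).mul_left _
  calc ∑' i, u (k + i) ≤ ∑' i, u k * ρ ^ i :=
        (hgeom.of_nonneg_of_le (fun i => hu0 _) hbound).tsum_le_tsum hbound hgeom
    _ = u k / (1 - ρ) := by
        rw [tsum_mul_left, tsum_geometric_of_lt_one hρ0 hρ1, div_eq_mul_inv]

lemma eventually_one_add_succ_mul_rpow_le {L a q : ℝ} (hL : 0 < L) (hq : 1 < q) :
    ∀ᶠ n : ℕ in atTop, (1 + ((n + 1 : ℕ) : ℝ) * L) ^ a ≤ q * (1 + (n : ℝ) * L) ^ a := by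
  have hlin : Tendsto (fun n : ℕ => 1 + (n : ℝ) * L) atTop atTop :=
    tendsto_atTop_add_const_left _ _
      (tendsto_natCast_atTop_atTop.atTop_mul_const hL)
  have hratio : Tendsto (fun n : ℕ => (1 + L / (1 + (n : ℝ) * L)) ^ a) atTop (𝓝 1) := by
    have h := ((hlin.const_div_atTop L).const_add 1).rpow_const (p := a) (by simp)
    simpa using h
  filter_upwards [hratio.eventually (gt_mem_nhds hq)] with n hn
  have hpos : 0 < 1 + (n : ℝ) * L := by positivity
  have hsplit : 1 + ((n + 1 : ℕ) : ℝ) * L = (1 + (n : ℝ) * L) * (1 + L / (1 + (n : ℝ) * L)) := by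
    push_cast
    field_simp
    ring
  rw [hsplit, Real.mul_rpow hpos.le (by positivity), mul_comm q]
  exact mul_le_mul_of_nonneg_left hn.le (by positivity)

lemma lt_one_add_mul_log_div_two {r : ℝ} (hr0 : 0 < r) (hr1 : r < 1) :
    r < 1 + r * Real.log r / 2 := by
  have h : r - 1 ≤ r * Real.log r := by
    have := mul_le_mul_of_nonneg_left (Real.one_sub_inv_le_log_of_pos hr0) hr0.le
    rwa [mul_sub, mul_one, mul_inv_cancel₀ hr0.ne'] at this
  linarith

theorem tail_estimate_geometric_log_general (r a : ℝ) (hr0 : 0 < r) (hr1 : r < 1) :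
    ∃ k₀ : ℕ, ∀ k : ℕ, k₀ ≤ k →
      ∑' i : ℕ, r ^ (k + i) * (1 + (↑(k + i) : ℝ) * Real.log 2) ^ a
        ≤ (-2 * r ^ ((k : ℝ) - 1) / Real.log r) * (1 + (k : ℝ) * Real.log 2) ^ a := by
  set L := Real.log 2
  set ρ := 1 + r * Real.log r / 2 with hρ
  have hlog : Real.log r < 0 := Real.log_neg hr0 hr1
  have hrρ : r < ρ := lt_one_add_mul_log_div_two hr0 hr1
  have hρ1 : ρ < 1 := by linarith [mul_neg_of_pos_of_neg hr0 hlog]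
  obtain ⟨k₀, hk₀⟩ := eventually_atTop.1 <|
    eventually_one_add_succ_mul_rpow_le (a := a) (Real.log_pos one_lt_two)
      ((one_lt_div hr0).2 hrρ)
  refine ⟨k₀, fun k hk => ?_⟩
  set u : ℕ → ℝ := fun n => r ^ n * (1 + (n : ℝ) * L) ^ a
  have hratio : ∀ n, k ≤ n → u (n + 1) ≤ ρ * u n := fun n hn =>
    calc u (n + 1) ≤ r ^ (n + 1) * (ρ / r * (1 + (n : ℝ) * L) ^ a) :=
          mul_le_mul_of_nonneg_left (hk₀ n (hk.trans hn)) (by positivity)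
      _ = ρ * u n := by field_simp [u]; ring
  calc ∑' i, u (k + i) ≤ u k / (1 - ρ) :=
        tsum_add_le_div_one_sub_of_succ_le_mul (fun n => by positivity) (by linarith) hρ1 hratio
    _ = _ := by
        have hgap : 1 - ρ = -(r * Real.log r) / 2 := by rw [hρ]; ring
        rw [hgap, Real.rpow_sub hr0, Real.rpow_natCast, Real.rpow_one]
        simp only [u]
        field_simp

/-- Tail estimate for the series `∑ r^i (1 + i ln 2)^a` with `0 < r < 1`, `a > 0`:
for all sufficiently large `k`, the tail starting at `k` is bounded by
`(-2 r^{k-1} / ln r) (1 + k ln 2)^a`. -/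
theorem tail_estimate_geometric_log (r a : ℝ) (hr0 : 0 < r) (hr1 : r < 1) (ha : 0 < a) :
    ∃ k₀ : ℕ, ∀ k : ℕ, k₀ ≤ k →
      ∑' i : ℕ, r ^ (k + i) * (1 + (↑(k + i) : ℝ) * Real.log 2) ^ a
        ≤ (-2 * r ^ ((k : ℝ) - 1) / Real.log r) * (1 + (k : ℝ) * Real.log 2) ^ a :=
  tail_estimate_geometric_log_general r a hr0 hr1
end

section
/- Let r̃ > 1 and ã < 0. Then, with g(t) = r̃^t (1 + t ln 2)^{ã}, the limit as k → ∞ of (∫_1^{k+1} r̃^t (1 + t ln 2)^{ã} dt) / (r̃^k (1 + k ln 2)^{ã}) equals r̃ / ln(r̃). -/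
/-!
Substituting `t = k + 1 - s` turns the quotient into `∫_0^k r̃^(1-s) ρ_k(s) ds`, where
`ρ_k(s) = h(k + 1 - s) / h(k)` for `h(t) = (1 + t c)^ã`, `c = ln 2`. For fixed `s`,
`ρ_k(s) → 1`, and `1 + k c ≤ (1 + (k + 1 - s) c) (1 + s c)` gives `ρ_k(s) ≤ (1 + s c)^(-ã)`
uniformly in `k`, a polynomial bound that the exponential decay of `r̃^(-s)` makes integrable.
Dominated convergence then yields `∫_0^∞ r̃^(1-s) ds = r̃ / ln r̃`.
-/

open Filter intervalIntegral MeasureTheory Set Topology Asymptotics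

theorem tendsto_intervalIntegral_Ioi_of_dominated {ι E : Type*} [NormedAddCommGroup E]
    [NormedSpace ℝ E] {l : Filter ι} [l.IsCountablyGenerated] {F : ι → ℝ → E} {f : ℝ → E}
    {bound : ℝ → ℝ} {a : ℝ} {b : ι → ℝ} (hb : Tendsto b l atTop)
    (hF_meas : ∀ᶠ i in l, AEStronglyMeasurable (F i) (volume.restrict (Ioi a)))
    (h_bound : ∀ᶠ i in l, ∀ x ∈ Ioc a (b i), ‖F i x‖ ≤ bound x)
    (bound_integrable : IntegrableOn bound (Ioi a))
    (h_lim : ∀ x ∈ Ioi a, Tendsto (fun i => F i x) l (𝓝 (f x))) :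
    Tendsto (fun i => ∫ x in a..b i, F i x) l (𝓝 (∫ x in Ioi a, f x)) := by
  have h_eq : ∀ᶠ i in l, ∫ x in Ioi a, (Iic (b i)).indicator (F i) x = ∫ x in a..b i, F i x := by
    filter_upwards [hb.eventually_ge_atTop a] with i hi
    rw [setIntegral_indicator measurableSet_Iic, Ioi_inter_Iic, integral_of_le hi]
  refine Tendsto.congr' h_eq (tendsto_integral_filter_of_dominated_convergence (fun x => ‖bound x‖)
    ?_ ?_ bound_integrable.norm ?_)
  · filter_upwards [hF_meas] with i hi
    exact hi.indicator measurableSet_Iic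
  · filter_upwards [h_bound] with i hi
    refine (ae_restrict_iff' measurableSet_Ioi).mpr (Eventually.of_forall fun x hx => ?_)
    by_cases hxb : x ∈ Iic (b i)
    · rw [indicator_of_mem hxb]
      exact (hi x ⟨hx, mem_Iic.mp hxb⟩).trans (Real.le_norm_self _)
    · rw [indicator_of_notMem hxb, norm_zero]
      exact norm_nonneg _
  · refine (ae_restrict_iff' measurableSet_Ioi).mpr (Eventually.of_forall fun x hx => ?_)
    refine (h_lim x hx).congr' ?_
    filter_upwards [hb.eventually_ge_atTop x] with i hi
    rw [indicator_of_mem (mem_Iic.mpr hi)]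

theorem rpow_one_sub_eq_mul_exp {r : ℝ} (hr : 0 < r) (s : ℝ) :
    r ^ (1 - s) = r * Real.exp (-Real.log r * s) := by
  rw [Real.rpow_sub hr, Real.rpow_one, Real.rpow_def_of_pos hr, div_eq_mul_inv, ← Real.exp_neg]
  ring_nf

theorem integral_rpow_one_sub_Ioi {r : ℝ} (hr : 1 < r) :
    ∫ s in Ioi (0 : ℝ), r ^ (1 - s) = r / Real.log r := by
  have hL := Real.log_pos hr
  simp_rw [rpow_one_sub_eq_mul_exp (zero_lt_one.trans hr)]
  rw [MeasureTheory.integral_const_mul, integral_exp_mul_Ioi (neg_lt_zero.mpr hL)]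
  field_simp
  simp

section OneAddMulRpow

variable {c : ℝ}

theorem tendsto_one_add_mul_rpow_div (hc : 0 < c) (a s : ℝ) :
    Tendsto (fun k => (1 + (k + 1 - s) * c) ^ a / (1 + k * c) ^ a) atTop (𝓝 1) := by
  have h_base : Tendsto (fun k => 1 + k * c) atTop atTop :=
    tendsto_atTop_add_const_left _ 1 (tendsto_id.atTop_mul_const hc)
  have h_ratio : Tendsto (fun k => (1 + (k + 1 - s) * c) / (1 + k * c)) atTop (𝓝 1) := by
    have h_small := (h_base.const_div_atTop ((1 - s) * c)).const_add 1
    rw [add_zero] at h_small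
    refine h_small.congr' ?_
    filter_upwards [h_base.eventually_gt_atTop 0] with k hk
    rw [eq_div_iff hk.ne', add_mul, div_mul_cancel₀ _ hk.ne']
    ring
  have h_pow := ((Real.continuousAt_rpow_const 1 a (Or.inl one_ne_zero)).tendsto.comp h_ratio)
  rw [Real.one_rpow] at h_pow
  refine h_pow.congr' ?_
  filter_upwards [eventually_ge_atTop (max s 0)] with k hk
  have hs := le_of_max_le_left hk
  have hk0 := le_of_max_le_right hk
  rw [Function.comp_apply, Real.div_rpow (by nlinarith) (by nlinarith)]

theorem abs_one_add_mul_rpow_div_le (hc : 0 ≤ c) {a k s : ℝ} (ha : a ≤ 0) (hs : 0 ≤ s)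
    (hsk : s ≤ k) : |(1 + (k + 1 - s) * c) ^ a / (1 + k * c) ^ a| ≤ (1 + s * c) ^ (-a) := by
  have hu : 0 < 1 + (k + 1 - s) * c := by nlinarith
  have hv : 0 < 1 + k * c := by nlinarith
  have h_eq : (1 + (k + 1 - s) * c) ^ a / (1 + k * c) ^ a =
      ((1 + k * c) / (1 + (k + 1 - s) * c)) ^ (-a) := by
    rw [Real.div_rpow hv.le hu.le, Real.rpow_neg hv.le, Real.rpow_neg hu.le, inv_div_inv]
  rw [h_eq, abs_of_nonneg (by positivity)]
  refine Real.rpow_le_rpow (by positivity) ?_ (neg_nonneg.mpr ha)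
  rw [div_le_iff₀ hu]
  nlinarith [mul_nonneg hs hc, mul_nonneg (mul_nonneg hs hc) (mul_nonneg (sub_nonneg.mpr hsk) hc)]

theorem isLittleO_one_add_mul_rpow_exp (hc : 0 < c) (p : ℝ) {b : ℝ} (hb : 0 < b) :
    (fun s => (1 + s * c) ^ p) =o[atTop] fun s => Real.exp (b * s) := by
  have h_base : Tendsto (fun s => 1 + s * c) atTop atTop :=
    tendsto_atTop_add_const_left _ 1 (tendsto_id.atTop_mul_const hc)
  refine ((isLittleO_rpow_exp_pos_mul_atTop p (div_pos hb hc)).comp_tendsto h_base).trans_isBigO ?_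
  refine (isBigO_const_mul_self (Real.exp (b / c)) _ atTop).congr_left fun s => ?_
  rw [Function.comp_apply, ← Real.exp_add]
  field_simp

theorem integrableOn_rpow_one_sub_mul_one_add_mul_rpow {r : ℝ} (hr : 1 < r) (hc : 0 < c)
    (p : ℝ) : IntegrableOn (fun s => r ^ (1 - s) * (1 + s * c) ^ p) (Ioi 0) := by
  have hr0 : 0 < r := zero_lt_one.trans hr
  have hL : 0 < Real.log r := Real.log_pos hr
  refine integrable_of_isBigO_exp_neg (half_pos hL) ?_ ?_
  · have h_rpow : Continuous fun s : ℝ => r ^ (1 - s) :=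
      continuous_const.rpow (continuous_const.sub continuous_id) fun _ => Or.inl hr0.ne'
    refine h_rpow.continuousOn.mul (ContinuousOn.rpow_const (by fun_prop) ?_)
    intro s hs
    exact Or.inl (by nlinarith [mem_Ici.mp hs])
  · have h_exp : (fun s => r ^ (1 - s)) =O[atTop] fun s => Real.exp (-Real.log r * s) :=
      (isBigO_const_mul_self r _ atTop).congr_left fun s => (rpow_one_sub_eq_mul_exp hr0 s).symm
    refine (h_exp.mul (isLittleO_one_add_mul_rpow_exp hc p (half_pos hL)).isBigO).congr_right ?_
    intro s
    rw [← Real.exp_add]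
    ring_nf

end OneAddMulRpow

theorem tendsto_integral_rpow_mul_div_rpow_mul {r : ℝ} (hr : 1 < r) {h B : ℝ → ℝ}
    (hh : Measurable h)
    (h_lim : ∀ s, Tendsto (fun k => h (k + 1 - s) / h k) atTop (𝓝 1))
    (h_bound : ∀ᶠ k in atTop, ∀ s ∈ Ioc 0 k, |h (k + 1 - s) / h k| ≤ B s)
    (hB : IntegrableOn (fun s => r ^ (1 - s) * B s) (Ioi 0)) :
    Tendsto (fun k => (∫ t in (1 : ℝ)..k + 1, r ^ t * h t) / (r ^ k * h k)) atTop
      (𝓝 (r / Real.log r)) := by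
  have hr0 : 0 < r := zero_lt_one.trans hr
  have h_eq : ∀ k : ℝ, (∫ t in (1 : ℝ)..k + 1, r ^ t * h t) / (r ^ k * h k) =
      ∫ s in (0 : ℝ)..k, r ^ (1 - s) * (h (k + 1 - s) / h k) := by
    intro k
    have h_sub := integral_comp_sub_left (fun t => r ^ t * h t / (r ^ k * h k)) (k + 1)
      (a := 0) (b := k)
    rw [add_sub_cancel_left, sub_zero] at h_sub
    rw [← intervalIntegral.integral_div, ← h_sub]
    congr 1 with s
    rw [mul_div_mul_comm, ← Real.rpow_sub hr0]
    ring_nf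
  simp_rw [h_eq]
  rw [← integral_rpow_one_sub_Ioi hr]
  refine tendsto_intervalIntegral_Ioi_of_dominated tendsto_id ?_ ?_ hB ?_
  · exact Eventually.of_forall fun k => by fun_prop
  · filter_upwards [h_bound] with k hk s hs
    rw [Real.norm_eq_abs, abs_mul, abs_of_pos (Real.rpow_pos_of_pos hr0 _)]
    exact mul_le_mul_of_nonneg_left (hk s hs) (Real.rpow_nonneg hr0.le _)
  · intro s _
    simpa using (h_lim s).const_mul (r ^ (1 - s))

/-- Asymptotics of the integral of `g(t) = r̃^t (1 + t ln 2)^ã` for `r̃ > 1`, `ã < 0`: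
the quotient of `∫_1^{k+1} g` by `g(k)` tends to `r̃ / ln r̃` as `k → ∞`. -/
theorem integral_quotient_limit (rt at_ : ℝ) (hrt : 1 < rt) (hat : at_ < 0) :
    Tendsto (fun k : ℝ =>
        (∫ t in (1 : ℝ)..(k + 1), rt ^ t * (1 + t * Real.log 2) ^ at_) /
          (rt ^ k * (1 + k * Real.log 2) ^ at_))
      atTop (nhds (rt / Real.log rt)) := by
  have hc : 0 < Real.log 2 := Real.log_pos one_lt_two
  refine tendsto_integral_rpow_mul_div_rpow_mul hrt (by fun_prop)
    (tendsto_one_add_mul_rpow_div hc at_)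
    (Eventually.of_forall fun k s hs => abs_one_add_mul_rpow_div_le hc.le hat.le hs.1.le hs.2)
    (integrableOn_rpow_one_sub_mul_one_add_mul_rpow hrt hc (-at_))
end

section
/- Let γ ≥ 1, p, q > 1 conjugate, r = 2^{-(γ+1)}, α < 0, a = pα. Then sup_{k≥1} (sum_{i=k}^∞ r^i (1 + i ln 2)^{pα})^{1/p} · (sum_{i=1}^k (r^i (1 + i ln 2)^{pα})^{1-q})^{1/q} < ∞. -/
/-!
With `w i = (1 + i ln 2)^{pα}` decreasing (as `pα < 0`), the weight `v i = r^i w i` decays at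
least geometrically: `v (i + j) ≤ r^j v i`. Comparing with a geometric series, the tail sum
from `k` is at most `v k / (1 - r)` and `∑_{i ≤ k} v i^{1-q}` is at most
`v k^{1-q} / (1 - r^{q-1})`. Since `1/p + (1-q)/q = 0`, the powers of `v k` cancel in the
product, leaving a bound independent of `k`.
-/

open Finset

/-- The `k`-th term of the Andersen–Heinig supremum for the weight sequence `v`. -/
noncomputable def andersenHeinig (v : ℕ → ℝ) (p q : ℝ) (k : ℕ) : ℝ :=
  (∑' i, v (k + i)) ^ (1 / p) * (∑ i ∈ Icc 1 k, v i ^ (1 - q)) ^ (1 / q)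

theorem pow_mul_le_pow_mul_of_antitone {ρ : ℝ} {w : ℕ → ℝ} (hρ : 0 ≤ ρ) (hw : Antitone w)
    (i j : ℕ) : ρ ^ (i + j) * w (i + j) ≤ ρ ^ j * (ρ ^ i * w i) :=
  calc ρ ^ (i + j) * w (i + j) ≤ ρ ^ (i + j) * w i := by
        gcongr
        exact hw (Nat.le_add_right i j)
    _ = ρ ^ j * (ρ ^ i * w i) := by ring

section GeometricDecay

variable {v : ℕ → ℝ} {ρ : ℝ}

theorem tsum_tail_le_of_geometric_decay (hv : ∀ i, 0 ≤ v i) (hρ0 : 0 ≤ ρ) (hρ1 : ρ < 1)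
    (hdecay : ∀ i j, v (i + j) ≤ ρ ^ j * v i) (k : ℕ) :
    ∑' i, v (k + i) ≤ v k / (1 - ρ) := by
  have hgeom := (summable_geometric_of_lt_one hρ0 hρ1).mul_right (v k)
  calc ∑' i, v (k + i) ≤ ∑' i, ρ ^ i * v k :=
        (hgeom.of_nonneg_of_le (fun i => hv _) (hdecay k)).tsum_le_tsum (hdecay k) hgeom
    _ = v k / (1 - ρ) := by
        rw [tsum_mul_right, tsum_geometric_of_lt_one hρ0 hρ1, div_eq_inv_mul]

theorem sum_range_rpow_le_of_geometric_decay (hv : ∀ i, 0 < v i) (hρ0 : 0 < ρ) (hρ1 : ρ < 1)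
    (hdecay : ∀ i j, v (i + j) ≤ ρ ^ j * v i) {c : ℝ} (hc : c < 0) (k : ℕ) :
    ∑ i ∈ range (k + 1), v i ^ c ≤ v k ^ c / (1 - ρ ^ (-c)) := by
  have hθ0 : 0 ≤ ρ ^ (-c) := Real.rpow_nonneg hρ0.le _
  have hθ1 : ρ ^ (-c) < 1 := Real.rpow_lt_one hρ0.le hρ1 (neg_pos.mpr hc)
  have hterm : ∀ i ∈ range (k + 1), v i ^ c ≤ v k ^ c * (ρ ^ (-c)) ^ (k - i) := by
    intro i hi
    have hik : i + (k - i) = k := Nat.add_sub_cancel' (Nat.lt_succ_iff.mp (mem_range.mp hi))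
    have hρk : 0 < ρ ^ (k - i) := pow_pos hρ0 _
    have hvk : v k / ρ ^ (k - i) ≤ v i := by
      rw [div_le_iff₀ hρk, mul_comm]
      simpa only [hik] using hdecay i (k - i)
    calc v i ^ c ≤ (v k / ρ ^ (k - i)) ^ c :=
          Real.rpow_le_rpow_of_nonpos (div_pos (hv k) hρk) hvk hc.le
      _ = v k ^ c * (ρ ^ (-c)) ^ (k - i) := by
          rw [Real.div_rpow (hv k).le hρk.le, Real.rpow_pow_comm hρ0.le, Real.rpow_neg hρk.le,
            div_eq_mul_inv]
  calc ∑ i ∈ range (k + 1), v i ^ c ≤ ∑ i ∈ range (k + 1), v k ^ c * (ρ ^ (-c)) ^ (k - i) :=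
        sum_le_sum hterm
    _ = v k ^ c * ∑ j ∈ range (k + 1), (ρ ^ (-c)) ^ j := by
        rw [← mul_sum]
        simpa only [add_tsub_cancel_right] using
          congrArg (v k ^ c * ·) (sum_range_reflect (fun j => (ρ ^ (-c)) ^ j) (k + 1))
    _ ≤ v k ^ c / (1 - ρ ^ (-c)) := by
        rw [← mul_one_div, range_eq_Ico]
        exact mul_le_mul_of_nonneg_left
          ((geom_sum_Ico_le_of_lt_one hθ0 hθ1).trans_eq (by rw [pow_zero]))
          (Real.rpow_pos_of_pos (hv k) _).le

theorem andersenHeinig_le_of_geometric_decay (hv : ∀ i, 0 < v i) (hρ0 : 0 < ρ) (hρ1 : ρ < 1)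
    (hdecay : ∀ i j, v (i + j) ≤ ρ ^ j * v i) {p q : ℝ} (hpq : p.HolderConjugate q) (k : ℕ) :
    andersenHeinig v p q k ≤ (1 - ρ)⁻¹ ^ (1 / p) * (1 - ρ ^ (q - 1))⁻¹ ^ (1 / q) := by
  have h1q : 1 - q < 0 := sub_neg.mpr hpq.symm.lt
  have htail := tsum_tail_le_of_geometric_decay (fun i => (hv i).le) hρ0.le hρ1 hdecay k
  have hhead : ∑ i ∈ Icc 1 k, v i ^ (1 - q) ≤ v k ^ (1 - q) / (1 - ρ ^ (q - 1)) := by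
    have hsub : Icc 1 k ⊆ range (k + 1) := fun i hi => by
      simp only [mem_Icc, mem_range] at hi ⊢
      omega
    calc ∑ i ∈ Icc 1 k, v i ^ (1 - q) ≤ ∑ i ∈ range (k + 1), v i ^ (1 - q) :=
          sum_le_sum_of_subset_of_nonneg hsub fun i _ _ => (Real.rpow_pos_of_pos (hv i) _).le
      _ ≤ v k ^ (1 - q) / (1 - ρ ^ (q - 1)) := by
          simpa only [neg_sub] using sum_range_rpow_le_of_geometric_decay hv hρ0 hρ1 hdecay h1q k
  have hcancel : v k ^ (1 / p) * (v k ^ (1 - q)) ^ (1 / q) = 1 := by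
    have hexp : 1 / p + (1 - q) * (1 / q) = 0 := by
      rw [sub_mul, one_mul, mul_one_div_cancel hpq.symm.ne_zero]
      linarith [hpq.one_div_add_one_div]
    rw [← Real.rpow_mul (hv k).le, ← Real.rpow_add (hv k), hexp, Real.rpow_zero]
  have hρq : 0 < 1 - ρ ^ (q - 1) :=
    sub_pos.mpr (Real.rpow_lt_one hρ0.le hρ1 (sub_pos.mpr hpq.symm.lt))
  calc andersenHeinig v p q k
      ≤ (v k / (1 - ρ)) ^ (1 / p) * (v k ^ (1 - q) / (1 - ρ ^ (q - 1))) ^ (1 / q) := by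
        have htail0 : 0 ≤ ∑' i, v (k + i) := tsum_nonneg fun i => (hv _).le
        have hhead0 : 0 ≤ ∑ i ∈ Icc 1 k, v i ^ (1 - q) :=
          sum_nonneg fun i _ => (Real.rpow_pos_of_pos (hv i) _).le
        exact mul_le_mul (Real.rpow_le_rpow htail0 htail hpq.one_div_nonneg)
          (Real.rpow_le_rpow hhead0 hhead hpq.symm.one_div_nonneg)
          (Real.rpow_nonneg hhead0 _) (Real.rpow_nonneg (htail0.trans htail) _)
    _ = v k ^ (1 / p) * (v k ^ (1 - q)) ^ (1 / q) *
          ((1 - ρ)⁻¹ ^ (1 / p) * (1 - ρ ^ (q - 1))⁻¹ ^ (1 / q)) := by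
        rw [div_eq_mul_inv (v k), div_eq_mul_inv (v k ^ (1 - q)),
          Real.mul_rpow (hv k).le (inv_pos.mpr (sub_pos.mpr hρ1)).le,
          Real.mul_rpow (Real.rpow_pos_of_pos (hv k) _).le (inv_pos.mpr hρq).le]
        ring
    _ = (1 - ρ)⁻¹ ^ (1 / p) * (1 - ρ ^ (q - 1))⁻¹ ^ (1 / q) := by rw [hcancel, one_mul]

end GeometricDecay

theorem AH_log_weight_finite_general (γ p q α : ℝ) (hγ : 1 ≤ γ) (hp : 1 < p)
    (hpq : 1 / p + 1 / q = 1) (hα : α < 0) :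
    let r : ℝ := 2 ^ (-(γ + 1))
    ∃ M : ℝ, ∀ k : ℕ, 1 ≤ k →
      (∑' i : ℕ, r ^ (k + i) * (1 + (↑(k + i) : ℝ) * Real.log 2) ^ (p * α)) ^ (1 / p) *
          (∑ i ∈ Finset.Icc 1 k,
            (r ^ i * (1 + (i : ℝ) * Real.log 2) ^ (p * α)) ^ (1 - q)) ^ (1 / q)
        ≤ M := by
  intro r
  have hr0 : 0 < r := by positivity
  have hr1 : r < 1 := Real.rpow_lt_one_of_one_lt_of_neg one_lt_two (by linarith)
  have hbase : ∀ i : ℕ, 0 < 1 + (i : ℝ) * Real.log 2 := fun i => by positivity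
  have hw : Antitone fun i : ℕ => (1 + (i : ℝ) * Real.log 2) ^ (p * α) := fun i j hij =>
    Real.rpow_le_rpow_of_nonpos (hbase i) (by gcongr) (mul_neg_of_pos_of_neg (by linarith) hα).le
  refine ⟨(1 - r)⁻¹ ^ (1 / p) * (1 - r ^ (q - 1))⁻¹ ^ (1 / q), fun k _ => ?_⟩
  exact andersenHeinig_le_of_geometric_decay
    (v := fun i => r ^ i * (1 + (i : ℝ) * Real.log 2) ^ (p * α))
    (fun i => by positivity) hr0 hr1 (pow_mul_le_pow_mul_of_antitone hr0.le hw)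
    (Real.holderConjugate_iff.mpr ⟨hp, by simpa only [one_div] using hpq⟩) k

/-- Finiteness of the Andersen–Heinig quantity for the logarithmic weight with negative
exponent `α`: with `r = 2^{-(γ+1)}` and `a = pα < 0`, the supremum over `k ≥ 1` of
`(∑_{i=k}^∞ r^i (1+i ln 2)^{pα})^{1/p} (∑_{i=1}^k (r^i (1+i ln 2)^{pα})^{1-q})^{1/q}`
is finite. -/
theorem AH_log_weight_finite (γ p q α : ℝ) (hγ : 1 ≤ γ) (hp : 1 < p) (hq : 1 < q)
    (hpq : 1 / p + 1 / q = 1) (hα : α < 0) :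
    let r : ℝ := 2 ^ (-(γ + 1))
    ∃ M : ℝ, ∀ k : ℕ, 1 ≤ k →
      (∑' i : ℕ, r ^ (k + i) * (1 + (↑(k + i) : ℝ) * Real.log 2) ^ (p * α)) ^ (1 / p) *
          (∑ i ∈ Finset.Icc 1 k,
            (r ^ i * (1 + (i : ℝ) * Real.log 2) ^ (p * α)) ^ (1 - q)) ^ (1 / q)
        ≤ M :=
  AH_log_weight_finite_general γ p q α hγ hp hpq hα
end
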